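/- arXiv:1709.04063 — 12 statements merged into one kernel-verified Lean document; each statement's English description precedes it below -/
import Mathlib

section
/- Let (X,d) be an arbitrary metric space and let p ∈ X. Then the distance function τ_p is a metric on X∖{p}; in particular, for all x, y, z ∈ X∖{p} it satisfies the triangle inequality τ_p(x,y) ≤ τ_p(x,z) + τ_p(z,y). -/
/-!
Write `a, b, c` for the square roots of `d(x,p), d(y,p), d(z,p)` and `u = d(x,z)`, `v = d(z,y)`,
`w = d(x,y)`. Exponentiating, the triangle inequality for `τ_p` becomes, after clearing
denominators, `w c² ≤ u b c + v a c + 2 u v`. Since `c² ≤ b² + v`, one gets `c² ≤ b c + v`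
(if `c > b` then `c (c - b) ≤ (c + b)(c - b) ≤ v`), and likewise `c² ≤ a c + u`; together with
`w ≤ u + v` this gives `w c² ≤ u (b c + v) + v (a c + u)`.
-/

noncomputable def tauOne {X : Type*} [MetricSpace X] (p x y : X) : ℝ :=
  Real.log (1 + 2 * dist x y / Real.sqrt (dist x p * dist y p))

open Real

section MetricSpace

variable {X : Type*} [MetricSpace X]

lemma dist_le_sqrt_dist_mul_sqrt_dist_add_dist (p y z : X) :
    dist z p ≤ √(dist z p) * √(dist y p) + dist z y := by
  set b := √(dist y p)
  set c := √(dist z p)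
  have hb : b ^ 2 = dist y p := sq_sqrt dist_nonneg
  have hc : c ^ 2 = dist z p := sq_sqrt dist_nonneg
  have hb0 : 0 ≤ b := sqrt_nonneg _
  have hc0 : 0 ≤ c := sqrt_nonneg _
  have htri : c ^ 2 ≤ b ^ 2 + dist z y := by
    rw [hb, hc, add_comm]; exact dist_triangle z y p
  rw [← hc]
  rcases le_total c b with hcb | hbc
  · nlinarith [mul_le_mul_of_nonneg_left hcb hc0, dist_nonneg (x := z) (y := y)]
  · nlinarith [mul_nonneg hb0 (sub_nonneg.2 hbc)]

lemma dist_mul_dist_le (p x y z : X) :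
    dist x y * dist z p ≤ dist x z * (√(dist z p) * √(dist y p)) +
      dist z y * (√(dist x p) * √(dist z p)) + 2 * dist x z * dist z y := by
  have hy := dist_le_sqrt_dist_mul_sqrt_dist_add_dist p y z
  have hx := dist_le_sqrt_dist_mul_sqrt_dist_add_dist p x z
  rw [dist_comm z x] at hx
  calc dist x y * dist z p ≤ (dist x z + dist z y) * dist z p :=
        mul_le_mul_of_nonneg_right (dist_triangle x z y) dist_nonneg
    _ ≤ dist x z * (√(dist z p) * √(dist y p) + dist z y) +
          dist z y * (√(dist z p) * √(dist x p) + dist x z) := by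
        rw [add_mul]
        gcongr
    _ = _ := by ring

lemma one_le_one_add_two_mul_dist_div (p x y : X) :
    1 ≤ 1 + 2 * dist x y / √(dist x p * dist y p) :=
  le_add_of_nonneg_right (by positivity)

lemma tauOne_nonneg (p x y : X) : 0 ≤ tauOne p x y :=
  log_nonneg (one_le_one_add_two_mul_dist_div p x y)

lemma tauOne_comm (p x y : X) : tauOne p x y = tauOne p y x := by
  rw [tauOne, tauOne, dist_comm x y, mul_comm (dist x p)]

lemma tauOne_self (p x : X) : tauOne p x x = 0 := by
  simp [tauOne]

lemma tauOne_eq_zero_iff {p x y : X} (hx : x ≠ p) (hy : y ≠ p) :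
    tauOne p x y = 0 ↔ x = y := by
  refine ⟨fun h => ?_, fun h => h ▸ tauOne_self p x⟩
  have hsqrt : 0 < √(dist x p * dist y p) :=
    sqrt_pos.2 (mul_pos (dist_pos.2 hx) (dist_pos.2 hy))
  have hone := one_le_one_add_two_mul_dist_div p x y
  have harg : 1 + 2 * dist x y / √(dist x p * dist y p) = 1 := by
    rcases log_eq_zero.1 h with h' | h' | h' <;> linarith
  have : 2 * dist x y / √(dist x p * dist y p) = 0 := by linarith
  rw [div_eq_zero_iff, or_iff_left hsqrt.ne', mul_eq_zero, or_iff_right two_ne_zero,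
    dist_eq_zero] at this
  exact this

lemma tauOne_triangle {p x y z : X} (hx : x ≠ p) (hy : y ≠ p) (hz : z ≠ p) :
    tauOne p x y ≤ tauOne p x z + tauOne p z y := by
  have ha : 0 < √(dist x p) := sqrt_pos.2 (dist_pos.2 hx)
  have hb : 0 < √(dist y p) := sqrt_pos.2 (dist_pos.2 hy)
  have hc : 0 < √(dist z p) := sqrt_pos.2 (dist_pos.2 hz)
  have hc2 : √(dist z p) ^ 2 = dist z p := sq_sqrt dist_nonneg
  have hkey := dist_mul_dist_le p x y z
  simp only [tauOne, sqrt_mul dist_nonneg]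
  rw [← log_mul (by positivity) (by positivity)]
  refine log_le_log (by positivity) (sub_nonneg.1 ?_)
  set a := √(dist x p)
  set b := √(dist y p)
  set c := √(dist z p)
  have hdiff : (1 + 2 * dist x z / (a * c)) * (1 + 2 * dist z y / (c * b)) -
      (1 + 2 * dist x y / (a * b)) =
      2 * (dist x z * (c * b) + dist z y * (a * c) + 2 * dist x z * dist z y -
        dist x y * dist z p) / (a * b * c ^ 2) := by
    rw [← hc2]
    field_simp
    ring
  rw [hdiff]
  exact div_nonneg (mul_nonneg zero_le_two (sub_nonneg.2 hkey)) (by positivity)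

end MetricSpace

theorem stmt0 {X : Type*} [MetricSpace X] (p : X) :
    (∀ x y : X, x ≠ p → y ≠ p → 0 ≤ tauOne p x y) ∧
    (∀ x y : X, x ≠ p → y ≠ p → tauOne p x y = tauOne p y x) ∧
    (∀ x y : X, x ≠ p → y ≠ p → (tauOne p x y = 0 ↔ x = y)) ∧
    (∀ x y z : X, x ≠ p → y ≠ p → z ≠ p →
      tauOne p x y ≤ tauOne p x z + tauOne p z y) :=
  ⟨fun x y _ _ => tauOne_nonneg p x y, fun x y _ _ => tauOne_comm p x y,
    fun _ _ hx hy => tauOne_eq_zero_iff hx hy,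
    fun _ _ _ hx hy hz => tauOne_triangle hx hy hz⟩
end

section
/- Let (X,d) be a Ptolemaic metric space and let p ∈ X. Then the distance function τ̃_p is a metric on X∖{p}; in particular, for all x, y, z ∈ X∖{p} it satisfies the triangle inequality τ̃_p(x,y) ≤ τ̃_p(x,z) + τ̃_p(z,y). -/
noncomputable def tauTilde {X : Type*} [MetricSpace X] (p x y : X) : ℝ :=
  Real.log (1 + dist x y / Real.sqrt (dist x p * dist y p))

lemma aux_sqrt (a b u : ℝ) (ha : 0 ≤ a) (hb : 0 ≤ b) (hu : 0 ≤ u)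
    (h : a ≤ b + u) : a ≤ Real.sqrt (a * b) + u := by
  have e : Real.sqrt (a * b) = Real.sqrt a * Real.sqrt b := Real.sqrt_mul ha b
  rcases le_total (Real.sqrt a) (Real.sqrt b) with h1 | h1
  · nlinarith [Real.sq_sqrt ha, Real.sqrt_nonneg a,
      mul_le_mul_of_nonneg_left h1 (Real.sqrt_nonneg a)]
  · nlinarith [Real.sq_sqrt ha, Real.sq_sqrt hb,
      mul_nonneg (sub_nonneg.2 h1) (Real.sqrt_nonneg b)]

lemma sqrt_ge_left (b c : ℝ) (hb : 0 ≤ b) (h : b ≤ c) : b ≤ Real.sqrt (b * c) := by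
  have : Real.sqrt (b * b) ≤ Real.sqrt (b * c) :=
    Real.sqrt_le_sqrt (by nlinarith)
  rwa [Real.sqrt_mul_self hb] at this

lemma key (a b c u v w : ℝ) (ha : 0 ≤ a) (hb : 0 ≤ b) (hc : 0 ≤ c)
    (hu : 0 ≤ u) (hv : 0 ≤ v)
    (htri : w ≤ u + v) (hpt : w * b ≤ u * c + v * a)
    (hau : a ≤ b + u) (hcv : c ≤ b + v) :
    w * b ≤ u * v + u * Real.sqrt (b * c) + v * Real.sqrt (a * b) := by
  rcases le_total c b with hcb | hbc
  · -- c ≤ b : use Ptolemy, u*c ≤ u*√(bc), v*a ≤ v*(√(ab)+u)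
    have h1 : c ≤ Real.sqrt (b * c) := by
      have := sqrt_ge_left c b hc hcb
      rwa [mul_comm] at this
    have h2 : a ≤ Real.sqrt (a * b) + u := aux_sqrt a b u ha hb hu hau
    nlinarith [mul_le_mul_of_nonneg_left h1 hu, mul_le_mul_of_nonneg_left h2 hv]
  · rcases le_total a b with hab | hba
    · -- a ≤ b : symmetric
      have h1 : a ≤ Real.sqrt (a * b) := sqrt_ge_left a b ha hab
      have h2 : c ≤ Real.sqrt (b * c) + v := by
        have := aux_sqrt c b v hc hb hv hcv
        rwa [mul_comm c b] at this
      nlinarith [mul_le_mul_of_nonneg_left h1 hv, mul_le_mul_of_nonneg_left h2 hu]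
    · -- b ≤ a and b ≤ c : use w ≤ u + v
      have h1 : b ≤ Real.sqrt (b * c) := sqrt_ge_left b c hb hbc
      have h2 : b ≤ Real.sqrt (a * b) := by
        have := sqrt_ge_left b a hb hba
        rwa [mul_comm] at this
      nlinarith [mul_le_mul_of_nonneg_left h1 hu, mul_le_mul_of_nonneg_left h2 hv,
        mul_nonneg hu hv, mul_le_mul_of_nonneg_right htri hb]

theorem stmt1 {X : Type*} [MetricSpace X]
    (hPtolemaic : ∀ x y z w : X,
      dist x y * dist z w ≤ dist x z * dist y w + dist x w * dist y z)
    (p : X) :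
    (∀ x y : X, x ≠ p → y ≠ p → 0 ≤ tauTilde p x y) ∧
    (∀ x y : X, x ≠ p → y ≠ p → tauTilde p x y = tauTilde p y x) ∧
    (∀ x y : X, x ≠ p → y ≠ p → (tauTilde p x y = 0 ↔ x = y)) ∧
    (∀ x y z : X, x ≠ p → y ≠ p → z ≠ p →
      tauTilde p x y ≤ tauTilde p x z + tauTilde p z y) := by
  refine ⟨?_, ?_, ?_, ?_⟩
  · intro x y hx hy
    apply Real.log_nonneg
    have : 0 ≤ dist x y / Real.sqrt (dist x p * dist y p) :=
      div_nonneg dist_nonneg (Real.sqrt_nonneg _)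
    linarith
  · intro x y hx hy
    unfold tauTilde
    rw [dist_comm x y, mul_comm (dist x p)]
  · intro x y hx hy
    have hs : 0 < Real.sqrt (dist x p * dist y p) :=
      Real.sqrt_pos.2 (mul_pos (dist_pos.2 hx) (dist_pos.2 hy))
    constructor
    · intro h
      unfold tauTilde at h
      rcases Real.log_eq_zero.mp h with h' | h' | h'
      · have : 0 ≤ dist x y / Real.sqrt (dist x p * dist y p) :=
          div_nonneg dist_nonneg (Real.sqrt_nonneg _)
        linarith
      · have : dist x y / Real.sqrt (dist x p * dist y p) = 0 := by linarith
        have hd : dist x y = 0 := by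
          rcases div_eq_zero_iff.mp this with h'' | h''
          · exact h''
          · exact absurd h'' (ne_of_gt hs)
        exact dist_eq_zero.mp hd
      · have : 0 ≤ dist x y / Real.sqrt (dist x p * dist y p) :=
          div_nonneg dist_nonneg (Real.sqrt_nonneg _)
        linarith
    · intro h
      subst h
      unfold tauTilde
      simp
  · intro x y z hx hy hz
    have ha : (0:ℝ) < dist x p := dist_pos.2 hx
    have hc : (0:ℝ) < dist y p := dist_pos.2 hy
    have hb : (0:ℝ) < dist z p := dist_pos.2 hz
    set a := dist x p with ha'
    set c := dist y p with hc'
    set b := dist z p with hb'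
    set u := dist x z with hu'
    set v := dist z y with hv'
    set w := dist x y with hw'
    have hu : (0:ℝ) ≤ u := dist_nonneg
    have hv : (0:ℝ) ≤ v := dist_nonneg
    have hw : (0:ℝ) ≤ w := dist_nonneg
    have htri : w ≤ u + v := dist_triangle x z y
    have hpt : w * b ≤ u * c + v * a := by
      have := hPtolemaic x y z p
      rw [dist_comm y z] at this
      -- this : dist x y * dist z p ≤ dist x z * dist y p + dist x p * dist z y
      nlinarith [this]
    have hau : a ≤ b + u := by
      have := dist_triangle x z p
      rw [ha', hb', hu']; linarith
    have hcv : c ≤ b + v := by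
      have h1 := dist_triangle y z p
      rw [hc', hb', hv', dist_comm z y]; linarith [h1]
    have hk := key a b c u v w ha.le hb.le hc.le hu hv htri hpt hau hcv
    set sa := Real.sqrt a with hsa'
    set sb := Real.sqrt b with hsb'
    set sc := Real.sqrt c with hsc'
    have hsa : 0 < sa := Real.sqrt_pos.2 ha
    have hsb : 0 < sb := Real.sqrt_pos.2 hb
    have hsc : 0 < sc := Real.sqrt_pos.2 hc
    have eac : Real.sqrt (a * c) = sa * sc := Real.sqrt_mul ha.le c
    have eab : Real.sqrt (a * b) = sa * sb := Real.sqrt_mul ha.le b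
    have ebc : Real.sqrt (b * c) = sb * sc := Real.sqrt_mul hb.le c
    have ebb : sb * sb = b := Real.mul_self_sqrt hb.le
    unfold tauTilde
    rw [eac, eab, ebc]
    have hk2 : w * (sb * sb) ≤ u * v + u * (sb * sc) + v * (sa * sb) := by
      rw [ebb]; rw [eab, ebc] at hk; exact hk
    have key2 : w / (sa * sc) ≤ u / (sa * sb) + v / (sb * sc) +
        (u / (sa * sb)) * (v / (sb * sc)) := by
      have hden : (0:ℝ) < (sa * sb) * (sb * sc) := by positivity
      have hden2 : (0:ℝ) < sa * sc := by positivity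
      rw [div_add_div _ _ (by positivity) (by positivity), div_mul_div_comm,
        div_add_div _ _ (by positivity) (by positivity), div_le_div_iff₀ hden2 (by positivity)]
      ring_nf
      nlinarith [mul_le_mul_of_nonneg_right hk2 (mul_pos hsa hsc).le,
        mul_pos hsa hsc, mul_pos hsb hsc, mul_pos hsa hsb]
    have hBC : (1 + u / (sa * sb)) * (1 + v / (sb * sc)) =
        1 + (u / (sa * sb) + v / (sb * sc) + (u / (sa * sb)) * (v / (sb * sc))) := by ring
    have hA : (0:ℝ) < 1 + w / (sa * sc) := by positivity
    have hstep : 1 + w / (sa * sc) ≤ (1 + u / (sa * sb)) * (1 + v / (sb * sc)) := by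
      rw [hBC]; linarith
    calc Real.log (1 + w / (sa * sc))
        ≤ Real.log ((1 + u / (sa * sb)) * (1 + v / (sb * sc))) :=
          Real.log_le_log hA hstep
      _ = Real.log (1 + u / (sa * sb)) + Real.log (1 + v / (sb * sc)) :=
          Real.log_mul (by positivity) (by positivity)
end

section
/- Let (X,d) be a metric space and p ∈ X. Then for all x, y, z, w ∈ X, μ_p(x,y)·μ_p(z,w) ≤ 9·max(μ_p(x,z)·μ_p(y,w), μ_p(x,w)·μ_p(y,z)). -/
/-!
Write `|x| = d(x, p)`. Both summands of `μ_p(x, y)` are controlled by `m(x, y) = max |x| |y|`: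
`d(x, y) ≥ ||x| - |y||` and `√(|x| |y|) ≥ min |x| |y|` give `m ≤ μ_p`, while
`d(x, y) ≤ |x| + |y|` and `√(|x| |y|) ≤ m` give `μ_p ≤ 3 m`. So it suffices to prove the
inequality for `m` with constant `1`, and there it is elementary: `m(x, y) m(z, w)` is one of
the four products `|x||z|, |x||w|, |y||z|, |y||w|`, each of which is at most one of the two
products on the right.
-/

noncomputable def muPt {X : Type*} [MetricSpace X] (p x y : X) : ℝ :=
  dist x y + Real.sqrt (dist x p * dist y p)

theorem max_mul_max_le_max_mul_max {a b c d : ℝ} (ha : 0 ≤ a) (hb : 0 ≤ b) (hc : 0 ≤ c)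
    (hd : 0 ≤ d) :
    max a b * max c d ≤ max (max a c * max b d) (max a d * max b c) := by
  rcases le_total b a with hab | hab <;> rcases le_total d c with hcd | hcd
  · rw [max_eq_left hab, max_eq_left hcd]
    exact le_max_of_le_right <|
      mul_le_mul (le_max_left a d) (le_max_right b c) hc (le_max_of_le_left ha)
  · rw [max_eq_left hab, max_eq_right hcd]
    exact le_max_of_le_left <|
      mul_le_mul (le_max_left a c) (le_max_right b d) hd (le_max_of_le_left ha)
  · rw [max_eq_right hab, max_eq_left hcd, mul_comm]
    exact le_max_of_le_left <|
      mul_le_mul (le_max_right a c) (le_max_left b d) hb (le_max_of_le_right hc)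
  · rw [max_eq_right hab, max_eq_right hcd, mul_comm]
    exact le_max_of_le_right <|
      mul_le_mul (le_max_right a d) (le_max_left b c) hb (le_max_of_le_right hd)

namespace muPt

variable {X : Type*} [MetricSpace X] (p x y : X)

theorem nonneg : 0 ≤ muPt p x y := by
  unfold muPt
  positivity

theorem max_dist_le : max (dist x p) (dist y p) ≤ muPt p x y := by
  wlog h : dist y p ≤ dist x p generalizing x y
  · simpa only [max_comm, muPt, dist_comm, mul_comm] using this y x (le_of_not_ge h)
  have hmin : dist y p ≤ Real.sqrt (dist x p * dist y p) :=
    Real.le_sqrt_of_sq_le (by rw [sq]; gcongr)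
  have htri : dist x p ≤ dist x y + dist y p := dist_triangle x y p
  rw [max_eq_left h, muPt]
  linarith

theorem le_three_mul_max_dist : muPt p x y ≤ 3 * max (dist x p) (dist y p) := by
  have htri : dist x y ≤ dist x p + dist y p := dist_triangle_right x y p
  have hsqrt : Real.sqrt (dist x p * dist y p) ≤ max (dist x p) (dist y p) :=
    Real.sqrt_le_iff.2 ⟨by positivity, by rw [sq]; gcongr <;> simp⟩
  rw [muPt]
  linarith [le_max_left (dist x p) (dist y p), le_max_right (dist x p) (dist y p)]

end muPt

theorem stmt4 {X : Type*} [MetricSpace X] (p : X) (x y z w : X) :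
    muPt p x y * muPt p z w ≤
      9 * max (muPt p x z * muPt p y w) (muPt p x w * muPt p y z) := by
  set m : X → X → ℝ := fun u v => max (dist u p) (dist v p)
  have hm_nonneg (u v : X) : 0 ≤ m u v := le_max_of_le_left dist_nonneg
  calc muPt p x y * muPt p z w
      ≤ (3 * m x y) * (3 * m z w) :=
        mul_le_mul (muPt.le_three_mul_max_dist p x y) (muPt.le_three_mul_max_dist p z w)
          (muPt.nonneg p z w) (by linarith [hm_nonneg x y])
    _ = 9 * (m x y * m z w) := by ring
    _ ≤ 9 * max (m x z * m y w) (m x w * m y z) := by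
        gcongr
        exact max_mul_max_le_max_mul_max dist_nonneg dist_nonneg dist_nonneg dist_nonneg
    _ ≤ 9 * max (muPt p x z * muPt p y w) (muPt p x w * muPt p y z) := by
        gcongr 9 * max (?_ * ?_) (?_ * ?_)
        all_goals first | exact muPt.nonneg .. | exact muPt.max_dist_le ..
end

section
/- Let (X,d) be a metric space, p ∈ X, and x, y, z ∈ X. If max(μ_p(x,z), μ_p(y,z)) ≥ K·min(μ_p(x,z), μ_p(y,z)) for some K > 3, then μ_p(x,z) + μ_p(y,z) ≤ (3(K+3)/(2(K−3)))·d(x,y). -/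
/-- Polynomial positivity: (K-1)*m^2 - c*m - c^2 > 0 for K > 3,
where m = K^2+10K-3, c = 2(K-3)(K+1). -/
private lemma polyQ {K : ℝ} (hK : K > 3) :
    2 * (K - 3) * (K + 1) * (K ^ 2 + 10 * K - 3)
      + (2 * (K - 3) * (K + 1)) ^ 2
      ≤ (K - 1) * (K ^ 2 + 10 * K - 3) ^ 2 := by
  nlinarith [pow_pos (by linarith : (0:ℝ) < K - 3) 5,
    pow_pos (by linarith : (0:ℝ) < K - 3) 4,
    pow_pos (by linarith : (0:ℝ) < K - 3) 3,
    pow_pos (by linarith : (0:ℝ) < K - 3) 2,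
    (by linarith : (0:ℝ) < K - 3)]

/-- Polynomial endgame. -/
private lemma endgame {K b d r : ℝ} (hK : K > 3) (hb : 0 ≤ b) (hd : 0 ≤ d)
    (hr : 0 ≤ r) (hr2 : r ^ 2 = b * d) (h : (K - 1) * b ≤ d + r) :
    2 * b + r + d ≤ 3 * (K + 3) / (2 * (K - 3)) * d := by
  have h2K3 : (0:ℝ) < 2 * (K - 3) := by linarith
  rw [div_mul_eq_mul_div, le_div_iff₀ h2K3]
  -- goal : (2*b + r + d) * (2*(K-3)) ≤ 3*(K+3)*d
  rcases le_or_gt (2 * (K - 3) * (K + 1) * r) ((K ^ 2 + 10 * K - 3) * d) with hP | hP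
  · -- P ≥ 0 case
    have hH : 0 ≤ d + r - (K - 1) * b := by linarith
    have key : (K - 1) * (3 * (K + 3) * d - (2 * b + r + d) * (2 * (K - 3)))
        = 4 * (K - 3) * (d + r - (K - 1) * b)
          + ((K ^ 2 + 10 * K - 3) * d - 2 * (K - 3) * (K + 1) * r) := by ring
    nlinarith [mul_nonneg (by linarith : (0:ℝ) ≤ 4 * (K - 3)) hH]
  · -- P < 0 case : derive contradiction
    exfalso
    have hm : (0:ℝ) < K ^ 2 + 10 * K - 3 := by nlinarith
    have hrpos : 0 < r := by
      rcases hr.lt_or_eq with h' | h'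
      · exact h'
      · exfalso
        rw [← h'] at hP
        nlinarith
    have hdpos : 0 < d := by
      rcases hd.lt_or_eq with h' | h'
      · exact h'
      · exfalso
        have : r ^ 2 = 0 := by rw [hr2, ← h']; ring
        have : r = 0 := by nlinarith
        nlinarith
    -- multiply h by d : (K-1) * r^2 ≤ d^2 + r*d
    have H2 : (K - 1) * r ^ 2 ≤ d ^ 2 + r * d := by
      have := mul_le_mul_of_nonneg_right h hd
      nlinarith
    have hQ := polyQ hK
    -- m*d < c*r with m,c > 0; square and cross-multiply
    have hc : (0:ℝ) < 2 * (K - 3) * (K + 1) := by nlinarith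
    nlinarith [mul_pos hm hdpos, mul_pos hc hrpos,
      mul_lt_mul_of_pos_left hP hm, mul_lt_mul_of_pos_left hP hc,
      mul_pos hrpos hrpos, sq_nonneg (r - d),
      mul_le_mul_of_nonneg_left H2 (le_of_lt (mul_pos hm hm)),
      mul_pos (mul_pos hm hm) hrpos]

/-- Key geometric inequality: muPt p x z - muPt p y z ≤ dist x y + sqrt (muPt p y z * dist x y). -/
private lemma key_geo {X : Type*} [MetricSpace X] (p x y z : X) :
    muPt p x z - muPt p y z ≤ dist x y + Real.sqrt (muPt p y z * dist x y) := by
  set A := dist x z with hA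
  set B := dist y z with hB
  set d := dist x y with hd
  have hA0 : 0 ≤ A := dist_nonneg
  have hB0 : 0 ≤ B := dist_nonneg
  have hd0 : 0 ≤ d := dist_nonneg
  have hxp : 0 ≤ dist x p := dist_nonneg
  have hyp : 0 ≤ dist y p := dist_nonneg
  have hzp : 0 ≤ dist z p := dist_nonneg
  set u := Real.sqrt (dist x p) with hu
  set v := Real.sqrt (dist y p) with hv
  set w := Real.sqrt (dist z p) with hw
  have hu0 : 0 ≤ u := Real.sqrt_nonneg _
  have hv0 : 0 ≤ v := Real.sqrt_nonneg _
  have hw0 : 0 ≤ w := Real.sqrt_nonneg _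
  have hu2 : u ^ 2 = dist x p := Real.sq_sqrt hxp
  have hv2 : v ^ 2 = dist y p := Real.sq_sqrt hyp
  have hw2 : w ^ 2 = dist z p := Real.sq_sqrt hzp
  have hmux : muPt p x z = A + u * w := by
    rw [muPt, Real.sqrt_mul hxp]
  have hmuy : muPt p y z = B + v * w := by
    rw [muPt, Real.sqrt_mul hyp]
  rw [hmux, hmuy]
  have hb0 : 0 ≤ B + v * w := by positivity
  -- A ≤ d + B
  have hABd : A ≤ d + B := dist_triangle x y z
  -- w^2 ≤ B + v^2
  have hwBv : w ^ 2 ≤ B + v ^ 2 := by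
    rw [hw2, hv2]
    calc dist z p ≤ dist z y + dist y p := dist_triangle z y p
    _ = B + dist y p := by rw [dist_comm z y]
  -- w^2 ≤ B + v*w  (the "b" lower bound)
  have hwb : w ^ 2 ≤ B + v * w := by
    rcases le_total v w with hvw | hvw
    · nlinarith
    · nlinarith
  -- w ≤ sqrt (B + v*w)
  have hwsb : w ≤ Real.sqrt (B + v * w) := by
    rw [Real.le_sqrt hw0 hb0]
    exact hwb
  -- main : u*w - v*w ≤ sqrt ((B+v*w)*d)
  have hmain : u * w - v * w ≤ Real.sqrt ((B + v * w) * d) := by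
    rcases le_total u v with huv | huv
    · have : u * w - v * w ≤ 0 := by nlinarith
      exact this.trans (Real.sqrt_nonneg _)
    · -- u ≥ v; (u - v)^2 ≤ u^2 - v^2 ≤ d
      have hxyd : dist x p ≤ d + dist y p := by
        calc dist x p ≤ dist x y + dist y p := dist_triangle x y p
        _ = d + dist y p := rfl
      have huv2 : (u - v) ^ 2 ≤ d := by nlinarith
      have huvs : u - v ≤ Real.sqrt d := by
        rw [Real.le_sqrt (by linarith) hd0]
        exact huv2
      calc u * w - v * w = w * (u - v) := by ring
      _ ≤ Real.sqrt (B + v * w) * Real.sqrt d := by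
          apply mul_le_mul hwsb huvs (by linarith) (Real.sqrt_nonneg _)
      _ = Real.sqrt ((B + v * w) * d) := (Real.sqrt_mul hb0 d).symm
  linarith
/-- Main auxiliary lemma assuming muPt p y z ≤ muPt p x z. -/
private lemma main_aux {X : Type*} [MetricSpace X] (p x y z : X) (K : ℝ)
    (hK : K > 3) (h : K * muPt p y z ≤ muPt p x z) :
    muPt p x z + muPt p y z ≤ (3 * (K + 3) / (2 * (K - 3))) * dist x y := by
  set a := muPt p x z with ha
  set b := muPt p y z with hb
  set d := dist x y with hd
  have hd0 : 0 ≤ d := dist_nonneg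
  have hb0 : 0 ≤ b := by
    rw [hb, muPt]; positivity
  set r := Real.sqrt (b * d) with hr
  have hr0 : 0 ≤ r := Real.sqrt_nonneg _
  have hr2 : r ^ 2 = b * d := Real.sq_sqrt (by positivity)
  have hkey : a - b ≤ d + r := key_geo p x y z
  have hKb : (K - 1) * b ≤ d + r := by nlinarith
  have := endgame hK hb0 hd0 hr0 hr2 hKb
  linarith

theorem stmt6 {X : Type*} [MetricSpace X] (p : X) (x y z : X) (K : ℝ)
    (hK : K > 3)
    (h : max (muPt p x z) (muPt p y z) ≥ K * min (muPt p x z) (muPt p y z)) :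
    muPt p x z + muPt p y z ≤ (3 * (K + 3) / (2 * (K - 3))) * dist x y := by
  rcases le_total (muPt p y z) (muPt p x z) with hc | hc
  · rw [max_eq_left hc, min_eq_right hc] at h
    exact main_aux p x y z K hK h
  · rw [max_eq_right hc, min_eq_left hc] at h
    have := main_aux p y x z K hK h
    rw [dist_comm y x] at this
    linarith
end

section
/- Let (X,d) be a metric space, let p_1, …, p_k ∈ X (k ≥ 1), and let x, y, z ∈ X. Then ∏_{i=1}^{k} (μ_{p_i}(x,z) + μ_{p_i}(y,z)) ≤ 9^k · (∏_{i=1}^{k} μ_{p_i}(x,z) + ∏_{i=1}^{k} μ_{p_i}(y,z)). -/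
lemma muPt_nonneg {X : Type*} [MetricSpace X] (p x y : X) : 0 ≤ muPt p x y := by
  unfold muPt; positivity

lemma dist_le_two_mu {X : Type*} [MetricSpace X] (p y z : X) :
    dist z p ≤ 2 * muPt p y z := by
  unfold muPt
  set E := dist y z with hE
  set c := dist z p with hc
  have hE0 : 0 ≤ E := dist_nonneg
  have hc0 : 0 ≤ c := dist_nonneg
  have hs0 : 0 ≤ Real.sqrt (dist y p * c) := Real.sqrt_nonneg _
  rcases le_or_gt c (2 * E) with h | h
  · linarith
  · have hv : c - E ≤ dist y p := by
      have h1 := dist_triangle z y p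
      have h2 : dist z y = E := dist_comm z y
      linarith
    have h3 : Real.sqrt ((c/2) * (c/2)) ≤ Real.sqrt (dist y p * c) := by
      apply Real.sqrt_le_sqrt
      nlinarith
    rw [show (c/2) * (c/2) = (c/2)^2 by ring, Real.sqrt_sq (by linarith)] at h3
    linarith

lemma mu_le {X : Type*} [MetricSpace X] (p x y z : X)
    (h : dist x z ≤ dist y z) : muPt p x z ≤ 8 * muPt p y z := by
  have hb := dist_le_two_mu p y z
  have hb0 := muPt_nonneg p y z
  have hE : dist y z ≤ muPt p y z := by
    unfold muPt
    have := Real.sqrt_nonneg (dist y p * dist z p)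
    linarith
  set D := dist x z with hD
  set c := dist z p with hc
  have hD0 : 0 ≤ D := dist_nonneg
  have hc0 : 0 ≤ c := dist_nonneg
  have hu : dist x p ≤ D + c := dist_triangle x z p
  have hu0 : 0 ≤ dist x p := dist_nonneg
  have hs : Real.sqrt (dist x p * c) ≤ (D + 2*c)/2 := by
    have h1 : Real.sqrt (dist x p * c) ≤ Real.sqrt (((D + 2*c)/2)^2) := by
      apply Real.sqrt_le_sqrt
      nlinarith
    rwa [Real.sqrt_sq (by linarith)] at h1
  show D + Real.sqrt (dist x p * c) ≤ 8 * muPt p y z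
  linarith

theorem stmt7 {X : Type*} [MetricSpace X] (k : ℕ) (hk : 1 ≤ k)
    (p : Fin k → X) (x y z : X) :
    ∏ i : Fin k, (muPt (p i) x z + muPt (p i) y z) ≤
      9 ^ k * (∏ i : Fin k, muPt (p i) x z + ∏ i : Fin k, muPt (p i) y z) := by
  have key : ∀ (x y : X), dist x z ≤ dist y z →
      ∏ i : Fin k, (muPt (p i) x z + muPt (p i) y z) ≤
        9 ^ k * ∏ i : Fin k, muPt (p i) y z := by
    intro x y h
    calc ∏ i : Fin k, (muPt (p i) x z + muPt (p i) y z)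
        ≤ ∏ i : Fin k, (9 * muPt (p i) y z) := by
          apply Finset.prod_le_prod
          · intro i _
            have h1 := muPt_nonneg (p i) x z
            have h2 := muPt_nonneg (p i) y z
            linarith
          · intro i _
            have := mu_le (p i) x y z h
            linarith
      _ = 9 ^ k * ∏ i : Fin k, muPt (p i) y z := by
          rw [Finset.prod_mul_distrib, Finset.prod_const]
          simp
  have hA : 0 ≤ ∏ i : Fin k, muPt (p i) x z :=
    Finset.prod_nonneg fun i _ => muPt_nonneg _ _ _
  have hB : 0 ≤ ∏ i : Fin k, muPt (p i) y z :=
    Finset.prod_nonneg fun i _ => muPt_nonneg _ _ _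
  rcases le_total (dist x z) (dist y z) with h | h
  · have := key x y h
    nlinarith [pow_pos (by norm_num : (0:ℝ) < 9) k]
  · have := key y x h
    have hcomm : ∏ i : Fin k, (muPt (p i) x z + muPt (p i) y z)
        = ∏ i : Fin k, (muPt (p i) y z + muPt (p i) x z) := by
      apply Finset.prod_congr rfl; intro i _; ring
    rw [hcomm]
    nlinarith [pow_pos (by norm_num : (0:ℝ) < 9) k]
end

section
/- Let K ≥ 1 and let r_{ij} ≥ 0 (i,j ∈ {1,2,3,4}) be real numbers with r_{ij} = r_{ji} and r_{ij} ≤ K·(r_{ik} + r_{jk}) for all i, j, k ∈ {1,2,3,4}. Then √(r_{12}·r_{34}) ≤ K·(√(r_{13}·r_{24}) + √(r_{14}·r_{23})). -/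
set_option maxHeartbeats 1000000 in
lemma key8 (K x y u v a b : ℝ) (hK : 1 ≤ K) (hx : 0 ≤ x) (hy : 0 ≤ y)
    (hu : 0 ≤ u) (hv : 0 ≤ v) (ha : 0 ≤ a) (hb : 0 ≤ b)
    (h1 : a ≤ K * (x^2 + v^2)) (h2 : a ≤ K * (u^2 + y^2))
    (h3 : b ≤ K * (x^2 + u^2)) (h4 : b ≤ K * (v^2 + y^2)) :
    a * b ≤ (K * (x * y + u * v))^2 := by
  have hK0 : 0 ≤ K := le_trans zero_le_one hK
  have hKK : 0 ≤ K * K := mul_nonneg hK0 hK0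
  rcases le_total x y with hxy | hxy <;> rcases le_total u v with huv | huv
  · rcases le_total (x*v) (y*u) with hc | hc
    · have hab : a * b ≤ (K*(x^2+v^2)) * (K*(x^2+u^2)) :=
        mul_le_mul h1 h3 hb (by positivity)
      have hP : (x^2+v^2)*(x^2+u^2) ≤ (x*y+u*v)^2 := by
        nlinarith [mul_nonneg (mul_nonneg hx hv) (sub_nonneg.mpr hc),
          mul_nonneg (mul_nonneg hx hu) (sub_nonneg.mpr (mul_le_mul hxy huv hu hy)),
          mul_nonneg (mul_nonneg hx hx) (sub_nonneg.mpr (mul_le_mul hxy hxy hx hy))]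
      nlinarith [hab, mul_le_mul_of_nonneg_left hP hKK]
    · have hab : a * b ≤ (K*(u^2+y^2)) * (K*(x^2+u^2)) :=
        mul_le_mul h2 h3 hb (by positivity)
      have hP : (u^2+y^2)*(x^2+u^2) ≤ (x*y+u*v)^2 := by
        nlinarith [mul_nonneg (mul_nonneg hu hy) (sub_nonneg.mpr hc),
          mul_nonneg (mul_nonneg hu hx) (sub_nonneg.mpr (mul_le_mul huv hxy hx hv)),
          mul_nonneg (mul_nonneg hu hu) (sub_nonneg.mpr (mul_le_mul huv huv hu hv))]
      nlinarith [hab, mul_le_mul_of_nonneg_left hP hKK]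
  · rcases le_total (x*u) (y*v) with hc | hc
    · have hab : a * b ≤ (K*(x^2+v^2)) * (K*(x^2+u^2)) :=
        mul_le_mul h1 h3 hb (by positivity)
      have hP : (x^2+v^2)*(x^2+u^2) ≤ (x*y+u*v)^2 := by
        nlinarith [mul_nonneg (mul_nonneg hx hu) (sub_nonneg.mpr hc),
          mul_nonneg (mul_nonneg hx hv) (sub_nonneg.mpr (mul_le_mul hxy huv hv hy)),
          mul_nonneg (mul_nonneg hx hx) (sub_nonneg.mpr (mul_le_mul hxy hxy hx hy))]
      nlinarith [hab, mul_le_mul_of_nonneg_left hP hKK]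
    · have hab : a * b ≤ (K*(x^2+v^2)) * (K*(v^2+y^2)) :=
        mul_le_mul h1 h4 hb (by positivity)
      have hP : (x^2+v^2)*(v^2+y^2) ≤ (x*y+u*v)^2 := by
        nlinarith [mul_nonneg (mul_nonneg hv hy) (sub_nonneg.mpr hc),
          mul_nonneg (mul_nonneg hv hx) (sub_nonneg.mpr (mul_le_mul hxy huv hv hy)),
          mul_nonneg (mul_nonneg hv hv) (sub_nonneg.mpr (mul_le_mul huv huv hv hu))]
      nlinarith [hab, mul_le_mul_of_nonneg_left hP hKK]
  · rcases le_total (y*v) (x*u) with hc | hc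
    · have hab : a * b ≤ (K*(u^2+y^2)) * (K*(v^2+y^2)) :=
        mul_le_mul h2 h4 hb (by positivity)
      have hP : (u^2+y^2)*(v^2+y^2) ≤ (x*y+u*v)^2 := by
        nlinarith [mul_nonneg (mul_nonneg hy hv) (sub_nonneg.mpr hc),
          mul_nonneg (mul_nonneg hy hu) (sub_nonneg.mpr (mul_le_mul hxy huv hu hx)),
          mul_nonneg (mul_nonneg hy hy) (sub_nonneg.mpr (mul_le_mul hxy hxy hy hx))]
      nlinarith [hab, mul_le_mul_of_nonneg_left hP hKK]
    · have hab : a * b ≤ (K*(u^2+y^2)) * (K*(x^2+u^2)) :=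
        mul_le_mul h2 h3 hb (by positivity)
      have hP : (u^2+y^2)*(x^2+u^2) ≤ (x*y+u*v)^2 := by
        nlinarith [mul_nonneg (mul_nonneg hu hx) (sub_nonneg.mpr hc),
          mul_nonneg (mul_nonneg hu hy) (sub_nonneg.mpr (mul_le_mul hxy huv hu hx)),
          mul_nonneg (mul_nonneg hu hu) (sub_nonneg.mpr (mul_le_mul huv huv hu hv))]
      nlinarith [hab, mul_le_mul_of_nonneg_left hP hKK]
  · rcases le_total (y*u) (x*v) with hc | hc
    · have hab : a * b ≤ (K*(u^2+y^2)) * (K*(v^2+y^2)) :=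
        mul_le_mul h2 h4 hb (by positivity)
      have hP : (u^2+y^2)*(v^2+y^2) ≤ (x*y+u*v)^2 := by
        nlinarith [mul_nonneg (mul_nonneg hy hu) (sub_nonneg.mpr hc),
          mul_nonneg (mul_nonneg hy hv) (sub_nonneg.mpr (mul_le_mul hxy huv hv hx)),
          mul_nonneg (mul_nonneg hy hy) (sub_nonneg.mpr (mul_le_mul hxy hxy hy hx))]
      nlinarith [hab, mul_le_mul_of_nonneg_left hP hKK]
    · have hab : a * b ≤ (K*(x^2+v^2)) * (K*(v^2+y^2)) :=
        mul_le_mul h1 h4 hb (by positivity)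
      have hP : (x^2+v^2)*(v^2+y^2) ≤ (x*y+u*v)^2 := by
        nlinarith [mul_nonneg (mul_nonneg hv hx) (sub_nonneg.mpr hc),
          mul_nonneg (mul_nonneg hv hy) (sub_nonneg.mpr (mul_le_mul hxy huv hv hx)),
          mul_nonneg (mul_nonneg hv hv) (sub_nonneg.mpr (mul_le_mul huv huv hv hu))]
      nlinarith [hab, mul_le_mul_of_nonneg_left hP hKK]

theorem stmt8 (K : ℝ) (hK : 1 ≤ K) (r : Fin 4 → Fin 4 → ℝ)
    (hnonneg : ∀ i j, 0 ≤ r i j)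
    (hsymm : ∀ i j, r i j = r j i)
    (htri : ∀ i j k, r i j ≤ K * (r i k + r j k)) :
    Real.sqrt (r 0 1 * r 2 3) ≤
      K * (Real.sqrt (r 0 2 * r 1 3) + Real.sqrt (r 0 3 * r 1 2)) := by
  set x := Real.sqrt (r 0 2) with hxdef
  set y := Real.sqrt (r 1 3) with hydef
  set u := Real.sqrt (r 0 3) with hudef
  set v := Real.sqrt (r 1 2) with hvdef
  have hx : 0 ≤ x := Real.sqrt_nonneg _
  have hy : 0 ≤ y := Real.sqrt_nonneg _
  have hu : 0 ≤ u := Real.sqrt_nonneg _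
  have hv : 0 ≤ v := Real.sqrt_nonneg _
  have hx2 : x^2 = r 0 2 := Real.sq_sqrt (hnonneg 0 2)
  have hy2 : y^2 = r 1 3 := Real.sq_sqrt (hnonneg 1 3)
  have hu2 : u^2 = r 0 3 := Real.sq_sqrt (hnonneg 0 3)
  have hv2 : v^2 = r 1 2 := Real.sq_sqrt (hnonneg 1 2)
  have h1 : r 0 1 ≤ K * (x^2 + v^2) := by rw [hx2, hv2]; exact htri 0 1 2
  have h2 : r 0 1 ≤ K * (u^2 + y^2) := by rw [hu2, hy2]; exact htri 0 1 3
  have h3 : r 2 3 ≤ K * (x^2 + u^2) := by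
    rw [hx2, hu2, hsymm 0 2, hsymm 0 3]; exact htri 2 3 0
  have h4 : r 2 3 ≤ K * (v^2 + y^2) := by
    rw [hv2, hy2, hsymm 1 2, hsymm 1 3]; exact htri 2 3 1
  have hkey := key8 K x y u v (r 0 1) (r 2 3) hK hx hy hu hv
    (hnonneg 0 1) (hnonneg 2 3) h1 h2 h3 h4
  have hrhs : 0 ≤ K * (x * y + u * v) := by positivity
  calc Real.sqrt (r 0 1 * r 2 3) ≤ Real.sqrt ((K * (x * y + u * v))^2) :=
        Real.sqrt_le_sqrt hkey
    _ = K * (x * y + u * v) := Real.sqrt_sq hrhs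
    _ = K * (Real.sqrt (r 0 2 * r 1 3) + Real.sqrt (r 0 3 * r 1 2)) := by
        rw [Real.sqrt_mul (hnonneg 0 2), Real.sqrt_mul (hnonneg 0 3)]
end

section
/- Let K ≥ 1 and let r_{ij} ≥ 0 (i,j ∈ {1,2,3,4}) be real numbers with r_{ij} = r_{ji} and r_{ij} ≤ K·(r_{ik} + r_{jk}) for all i, j, k ∈ {1,2,3,4}. Then r_{12}·r_{34} ≤ 2K²·(r_{13}·r_{24} + r_{14}·r_{23}) ≤ (2K)²·max(r_{13}·r_{24}, r_{14}·r_{23}). -/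
lemma key_stmt9 (K a b c d P Q : ℝ) (hK : 1 ≤ K)
    (ha : 0 ≤ a) (hb : 0 ≤ b) (hc : 0 ≤ c) (hd : 0 ≤ d)
    (hP : 0 ≤ P) (hQ : 0 ≤ Q)
    (h1 : P ≤ K * (a + d)) (h2 : P ≤ K * (b + c))
    (h3 : Q ≤ K * (a + c)) (h4 : Q ≤ K * (b + d)) :
    P * Q ≤ 2 * K ^ 2 * (a * b + c * d) := by
  have hK0 : (0:ℝ) ≤ K := le_trans zero_le_one hK
  rcases le_or_gt ((a - d) * (c - b)) 0 with h | h
  · nlinarith [mul_le_mul h1 h4 hQ (by positivity), mul_le_mul h2 h3 hQ (by positivity)]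
  · rcases mul_pos_iff.mp h with ⟨h5, h6⟩ | ⟨h5, h6⟩
    · rcases le_total a c with hac | hac
      · have hP' : P ≤ K * (2 * a) := by nlinarith
        nlinarith [mul_le_mul hP' h4 hQ (by positivity), mul_nonneg hd (sub_nonneg.mpr hac)]
      · have hP' : P ≤ K * (2 * c) := by nlinarith
        nlinarith [mul_le_mul hP' h3 hQ (by positivity), mul_nonneg hb (sub_nonneg.mpr hac)]
    · rcases le_total d b with hdb | hdb
      · have hP' : P ≤ K * (2 * d) := by nlinarith
        nlinarith [mul_le_mul hP' h3 hQ (by positivity), mul_nonneg ha (sub_nonneg.mpr hdb)]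
      · have hP' : P ≤ K * (2 * b) := by nlinarith
        nlinarith [mul_le_mul hP' h4 hQ (by positivity), mul_nonneg hc (sub_nonneg.mpr hdb)]

theorem stmt9 (K : ℝ) (hK : 1 ≤ K) (r : Fin 4 → Fin 4 → ℝ)
    (hnonneg : ∀ i j, 0 ≤ r i j)
    (hsymm : ∀ i j, r i j = r j i)
    (htri : ∀ i j k, r i j ≤ K * (r i k + r j k)) :
    r 0 1 * r 2 3 ≤ 2 * K ^ 2 * (r 0 2 * r 1 3 + r 0 3 * r 1 2) ∧
    2 * K ^ 2 * (r 0 2 * r 1 3 + r 0 3 * r 1 2) ≤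
      (2 * K) ^ 2 * max (r 0 2 * r 1 3) (r 0 3 * r 1 2) := by
  constructor
  · apply key_stmt9 K (r 0 2) (r 1 3) (r 0 3) (r 1 2) (r 0 1) (r 2 3) hK
      (hnonneg 0 2) (hnonneg 1 3) (hnonneg 0 3) (hnonneg 1 2)
      (hnonneg 0 1) (hnonneg 2 3)
    · exact htri 0 1 2
    · have := htri 0 1 3
      linarith
    · have := htri 2 3 0
      rw [hsymm 2 0, hsymm 3 0] at this
      linarith
    · have := htri 2 3 1
      rw [hsymm 2 1, hsymm 3 1] at this
      linarith
  · have hK0 : (0:ℝ) ≤ K := le_trans zero_le_one hK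
    have h1 := le_max_left (r 0 2 * r 1 3) (r 0 3 * r 1 2)
    have h2 := le_max_right (r 0 2 * r 1 3) (r 0 3 * r 1 2)
    nlinarith [sq_nonneg K]
end

section
/- Let (X,d) be a metric space and p_1, …, p_k ∈ X (k ≥ 1). Then for all x, y, z ∈ X, μ_P(x,y) ≤ (27/2)^k · (μ_P(x,z) + μ_P(z,y)). -/
noncomputable def muSet {X : Type*} [MetricSpace X] {k : ℕ} (p : Fin k → X)
    (x y : X) : ℝ :=
  ∏ i : Fin k, muPt (p i) x y

lemma muPt_symm {X : Type*} [MetricSpace X] (p x y : X) : muPt p x y = muPt p y x := by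
  simp [muPt, dist_comm, mul_comm]

lemma muSet_nonneg {X : Type*} [MetricSpace X] {k : ℕ} (p : Fin k → X) (x y : X) :
    0 ≤ muSet p x y :=
  Finset.prod_nonneg fun i _ => muPt_nonneg _ _ _

lemma muSet_symm {X : Type*} [MetricSpace X] {k : ℕ} (p : Fin k → X) (x y : X) :
    muSet p x y = muSet p y x :=
  Finset.prod_congr rfl fun i _ => muPt_symm _ _ _

lemma sqrt_add' (u v : ℝ) (hu : 0 ≤ u) (hv : 0 ≤ v) :
    Real.sqrt (u + v) ≤ Real.sqrt u + Real.sqrt v := by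
  have h1 := Real.sq_sqrt hu
  have h2 := Real.sq_sqrt hv
  have h3 := Real.sqrt_nonneg u
  have h4 := Real.sqrt_nonneg v
  rw [show Real.sqrt u + Real.sqrt v
      = Real.sqrt ((Real.sqrt u + Real.sqrt v) ^ 2) by rw [Real.sqrt_sq (by positivity)]]
  apply Real.sqrt_le_sqrt; nlinarith

lemma sqrt_helper (a b c : ℝ) (ha : 0 ≤ a) (hb : 0 ≤ b) (hc : 0 ≤ c)
    (h : c - a ≤ b) :
    Real.sqrt (a * c) ≤ Real.sqrt 2 * a + Real.sqrt (b * c) := by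
  rcases le_or_gt c (2 * a) with h1 | h1
  · have h2 : Real.sqrt (a * c) ≤ Real.sqrt (a * (2 * a)) := by
      apply Real.sqrt_le_sqrt; nlinarith
    have h3 : Real.sqrt (a * (2 * a)) = Real.sqrt 2 * a := by
      rw [show a * (2 * a) = 2 * a ^ 2 by ring, Real.sqrt_mul (by norm_num),
        Real.sqrt_sq ha]
    nlinarith [Real.sqrt_nonneg (b * c), h2, h3]
  · have hab : a ≤ b := by linarith
    have h2 : Real.sqrt (a * c) ≤ Real.sqrt (b * c) := by
      apply Real.sqrt_le_sqrt; nlinarith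
    nlinarith [Real.sqrt_nonneg (2:ℝ), Real.sqrt_nonneg (a*c), h2]

lemma muPt_quasi {X : Type*} [MetricSpace X] (p x y z : X)
    (h : dist x y ≤ 2 * dist x z) :
    muPt p x y ≤ (27 / 2 : ℝ) * muPt p x z := by
  set a := dist x z with ha
  set dxp := dist x p with hdxp
  set dzp := dist z p with hdzp
  set dyp := dist y p with hdyp
  have ha0 : 0 ≤ a := dist_nonneg
  have hx0 : 0 ≤ dxp := dist_nonneg
  have hz0 : 0 ≤ dzp := dist_nonneg
  have hy0 : 0 ≤ dyp := dist_nonneg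
  set A := Real.sqrt (dxp * dzp) with hA
  have hA0 : 0 ≤ A := Real.sqrt_nonneg _
  -- dyp ≤ 3a + dzp
  have htri1 : dyp ≤ 3 * a + dzp := by
    have := dist_triangle y x p
    have := dist_triangle x z p
    have hxy := dist_comm x y
    nlinarith [dist_triangle y z p, dist_triangle y x z, dist_comm y x]
  -- √(dxp*dyp) ≤ √(3a·dxp) + √(dxp·dzp)
  have step1 : Real.sqrt (dxp * dyp) ≤ Real.sqrt (3 * (a * dxp)) + A := by
    have h1 : Real.sqrt (dxp * dyp) ≤ Real.sqrt (3 * (a * dxp) + dxp * dzp) := by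
      apply Real.sqrt_le_sqrt; nlinarith
    have h2 : Real.sqrt (3 * (a * dxp) + dxp * dzp) ≤
        Real.sqrt (3 * (a * dxp)) + Real.sqrt (dxp * dzp) :=
      sqrt_add' _ _ (by positivity) (by positivity)
    linarith
  -- √(3 a dxp) = √3 √(a dxp) ≤ √3 (√2 a + A)
  have step2 : Real.sqrt (a * dxp) ≤ Real.sqrt 2 * a + A := by
    have hcond : dxp - a ≤ dzp := by
      have := dist_triangle x z p; simp only [← ha, ← hdxp, ← hdzp] at this; linarith
    have := sqrt_helper a dzp dxp ha0 hz0 hx0 hcond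
    rwa [show dzp * dxp = dxp * dzp by ring] at this
  have step3 : Real.sqrt (3 * (a * dxp)) = Real.sqrt 3 * Real.sqrt (a * dxp) :=
    Real.sqrt_mul (by norm_num) _
  have s2 : Real.sqrt 2 ≤ 1.5 := by
    rw [show (1.5 : ℝ) = Real.sqrt (1.5 ^ 2) by rw [Real.sqrt_sq]; norm_num]
    apply Real.sqrt_le_sqrt; norm_num
  have s3 : Real.sqrt 3 ≤ 2 := by
    rw [show (2 : ℝ) = Real.sqrt (2 ^ 2) by rw [Real.sqrt_sq]; norm_num]
    apply Real.sqrt_le_sqrt; norm_num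
  have s3' : 0 ≤ Real.sqrt 3 := Real.sqrt_nonneg _
  have s2' : 0 ≤ Real.sqrt 2 := Real.sqrt_nonneg _
  have : muPt p x y ≤ 2 * a + Real.sqrt 3 * (Real.sqrt 2 * a + A) + A := by
    have hsq : Real.sqrt (a * dxp) ≥ 0 := Real.sqrt_nonneg _
    have := mul_le_mul_of_nonneg_left step2 s3'
    unfold muPt
    simp only [← hdxp, ← hdyp]
    rw [step3] at step1
    nlinarith
  have hmu : muPt p x z = a + A := rfl
  rw [hmu]
  nlinarith [mul_le_mul s3 (by nlinarith : Real.sqrt 2 * a + A ≤ 1.5 * a + A)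
    (by positivity) (by norm_num : (0:ℝ) ≤ 2)]

lemma muSet_quasi {X : Type*} [MetricSpace X] {k : ℕ} (p : Fin k → X) (x y z : X)
    (h : dist x y ≤ 2 * dist x z) :
    muSet p x y ≤ (27 / 2 : ℝ) ^ k * muSet p x z := by
  unfold muSet
  calc (∏ i : Fin k, muPt (p i) x y)
      ≤ ∏ i : Fin k, ((27 / 2 : ℝ) * muPt (p i) x z) := by
        apply Finset.prod_le_prod (fun i _ => muPt_nonneg _ _ _)
          (fun i _ => muPt_quasi _ _ _ _ h)
    _ = (27 / 2 : ℝ) ^ k * ∏ i : Fin k, muPt (p i) x z := by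
        rw [Finset.prod_mul_distrib, Finset.prod_const, Finset.card_univ,
          Fintype.card_fin]

theorem stmt10 {X : Type*} [MetricSpace X] (k : ℕ) (hk : 1 ≤ k)
    (p : Fin k → X) (x y z : X) :
    muSet p x y ≤ (27 / 2 : ℝ) ^ k * (muSet p x z + muSet p z y) := by
  have hpow : (0:ℝ) ≤ (27 / 2 : ℝ) ^ k := by positivity
  have htri := dist_triangle x z y
  rcases le_total (dist x y) (2 * dist x z) with hcase | hcase
  · have := muSet_quasi p x y z hcase
    nlinarith [muSet_nonneg p z y]
  · have hcase' : dist y x ≤ 2 * dist y z := by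
      rw [dist_comm y x, dist_comm y z]; linarith [dist_comm z y ▸ htri]
    have := muSet_quasi p y x z hcase'
    rw [muSet_symm p y x, muSet_symm p y z] at this
    nlinarith [muSet_nonneg p x z]
end

section
/- Let (X,d) be a metric space and p ∈ X. Then the distance function τ̃_p on X∖{p} satisfies the Gromov four-point condition with constant δ = log 3; that is, for all x, y, z, v ∈ X∖{p}, τ̃_p(x,y) + τ̃_p(z,v) ≤ max(τ̃_p(x,z) + τ̃_p(y,v), τ̃_p(x,v) + τ̃_p(y,z)) + 2·log 3. -/
private lemma ptolemyS (a b c w dxy dxz dxv dyz dyv dzv : ℝ)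
    (hab : dxy ≤ a + b) (hac : dxz ≤ a + c) (haw : dxv ≤ a + w)
    (hbc : dyz ≤ b + c) (hbw : dyv ≤ b + w) (hcw : dzv ≤ c + w)
    (k1 : a ≤ dxy + b) (k2 : b ≤ dxy + a) (k3 : a ≤ dxz + c) (k4 : c ≤ dxz + a)
    (k5 : a ≤ dxv + w) (k6 : w ≤ dxv + a) (k7 : b ≤ dyz + c) (k8 : c ≤ dyz + b)
    (k9 : b ≤ dyv + w) (k10 : w ≤ dyv + b) (k11 : c ≤ dzv + w) (k12 : w ≤ dzv + c)
    (t1 : dxy ≤ dxz + dyz) (t2 : dxy ≤ dxv + dyv) (t3 : dzv ≤ dxz + dxv)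
    (t4 : dzv ≤ dyz + dyv) (t5 : dxz ≤ dxv + dzv) (t6 : dxv ≤ dxz + dzv)
    (t7 : dyz ≤ dxy + dxz) :
    (dxy + a + b) * (dzv + c + w) ≤
      (dxz + a + c) * (dyv + b + w) + (dxv + a + w) * (dyz + b + c) := by
  linarith [mul_nonneg (sub_nonneg.2 hcw) (sub_nonneg.2 hcw),
    mul_nonneg (sub_nonneg.2 hab) (sub_nonneg.2 t5),
    mul_nonneg (sub_nonneg.2 hab) (sub_nonneg.2 k2),
    mul_nonneg (sub_nonneg.2 hac) (sub_nonneg.2 k5),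
    mul_nonneg (sub_nonneg.2 k3) (sub_nonneg.2 k9),
    mul_nonneg (sub_nonneg.2 k5) (sub_nonneg.2 k7),
    mul_nonneg (sub_nonneg.2 k4) (sub_nonneg.2 hbc),
    mul_nonneg (sub_nonneg.2 haw) (sub_nonneg.2 t1),
    mul_nonneg (sub_nonneg.2 k12) (sub_nonneg.2 t2),
    mul_nonneg (sub_nonneg.2 k1) (sub_nonneg.2 t3),
    mul_nonneg (sub_nonneg.2 k11) (sub_nonneg.2 t1),
    mul_nonneg (sub_nonneg.2 hcw) (sub_nonneg.2 t2),
    mul_nonneg (sub_nonneg.2 hab) (sub_nonneg.2 t7),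
    mul_nonneg (sub_nonneg.2 k4) (sub_nonneg.2 t4),
    mul_nonneg (sub_nonneg.2 k7) (sub_nonneg.2 hbw),
    mul_nonneg (sub_nonneg.2 haw) (sub_nonneg.2 k10),
    mul_nonneg (sub_nonneg.2 hab) (sub_nonneg.2 hbc),
    mul_nonneg (sub_nonneg.2 t1) (sub_nonneg.2 t2),
    mul_nonneg (sub_nonneg.2 hcw) (sub_nonneg.2 t6),
    mul_nonneg (sub_nonneg.2 hab) (sub_nonneg.2 t3),
    mul_nonneg (sub_nonneg.2 hac) (sub_nonneg.2 t4),
    mul_nonneg (sub_nonneg.2 k8) (sub_nonneg.2 t3),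
    mul_nonneg (sub_nonneg.2 hab) (sub_nonneg.2 hbw),
    mul_nonneg (sub_nonneg.2 k6) (sub_nonneg.2 t4)]

/-- For `0 ≤ a, b` with `|a - b| ≤ d`: `a + b ≤ d + 2 * √(a*b)`. -/
private lemma S_le_two_N {a b d : ℝ} (ha : 0 ≤ a) (hb : 0 ≤ b)
    (hd : |a - b| ≤ d) : a + b ≤ d + 2 * Real.sqrt (a * b) := by
  have hsa := Real.sqrt_nonneg a
  have hsb := Real.sqrt_nonneg b
  have h1 : Real.sqrt a ^ 2 = a := Real.sq_sqrt ha
  have h2 : Real.sqrt b ^ 2 = b := Real.sq_sqrt hb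
  have h3 : Real.sqrt (a * b) = Real.sqrt a * Real.sqrt b := Real.sqrt_mul ha b
  rcases le_total a b with h | h
  · have habs : |a - b| = b - a := by rw [abs_of_nonpos (by linarith)]; ring
    have hs : Real.sqrt a ≤ Real.sqrt b := Real.sqrt_le_sqrt h
    rw [habs] at hd
    nlinarith [mul_nonneg hsa (sub_nonneg.2 hs)]
  · have habs : |a - b| = a - b := abs_of_nonneg (by linarith)
    have hs : Real.sqrt b ≤ Real.sqrt a := Real.sqrt_le_sqrt h
    rw [habs] at hd
    nlinarith [mul_nonneg hsb (sub_nonneg.2 hs)]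

private lemma sqrt_le_add {a b : ℝ} (ha : 0 ≤ a) (hb : 0 ≤ b) :
    Real.sqrt (a * b) ≤ a + b := by
  have h : Real.sqrt (a * b) ≤ Real.sqrt ((a + b) ^ 2) :=
    Real.sqrt_le_sqrt (by nlinarith)
  rwa [Real.sqrt_sq (by linarith)] at h

theorem stmt12 {X : Type*} [MetricSpace X] (p : X)
    (x y z v : X) (hx : x ≠ p) (hy : y ≠ p) (hz : z ≠ p) (hv : v ≠ p) :
    tauTilde p x y + tauTilde p z v ≤
      max (tauTilde p x z + tauTilde p y v) (tauTilde p x v + tauTilde p y z) +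
        2 * Real.log 3 := by
  set a := dist x p with ha_def
  set b := dist y p with hb_def
  set c := dist z p with hc_def
  set w := dist v p with hw_def
  have ha : 0 < a := dist_pos.2 hx
  have hb : 0 < b := dist_pos.2 hy
  have hc : 0 < c := dist_pos.2 hz
  have hw : 0 < w := dist_pos.2 hv
  -- sqrt denominators
  have sab : 0 < Real.sqrt (a * b) := Real.sqrt_pos.2 (by positivity)
  have scw : 0 < Real.sqrt (c * w) := Real.sqrt_pos.2 (by positivity)
  have sac : 0 < Real.sqrt (a * c) := Real.sqrt_pos.2 (by positivity)
  have sbw : 0 < Real.sqrt (b * w) := Real.sqrt_pos.2 (by positivity)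
  have saw : 0 < Real.sqrt (a * w) := Real.sqrt_pos.2 (by positivity)
  have sbc : 0 < Real.sqrt (b * c) := Real.sqrt_pos.2 (by positivity)
  -- N values
  set Nxy := dist x y + Real.sqrt (a * b) with hNxy
  set Nzv := dist z v + Real.sqrt (c * w) with hNzv
  set Nxz := dist x z + Real.sqrt (a * c) with hNxz
  set Nyv := dist y v + Real.sqrt (b * w) with hNyv
  set Nxv := dist x v + Real.sqrt (a * w) with hNxv
  set Nyz := dist y z + Real.sqrt (b * c) with hNyz
  have hNxy0 : 0 < Nxy := by have := dist_nonneg (x := x) (y := y); positivity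
  have hNzv0 : 0 < Nzv := by have := dist_nonneg (x := z) (y := v); positivity
  have hNxz0 : 0 < Nxz := by have := dist_nonneg (x := x) (y := z); positivity
  have hNyv0 : 0 < Nyv := by have := dist_nonneg (x := y) (y := v); positivity
  have hNxv0 : 0 < Nxv := by have := dist_nonneg (x := x) (y := v); positivity
  have hNyz0 : 0 < Nyz := by have := dist_nonneg (x := y) (y := z); positivity
  -- tauTilde as log of quotient
  have tau_eq : ∀ (u u' : X), u ≠ p → u' ≠ p →
      tauTilde p u u' = Real.log ((dist u u' + Real.sqrt (dist u p * dist u' p)) /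
        Real.sqrt (dist u p * dist u' p)) := by
    intro u u' hu hu'
    have h1 : 0 < Real.sqrt (dist u p * dist u' p) :=
      Real.sqrt_pos.2 (mul_pos (dist_pos.2 hu) (dist_pos.2 hu'))
    unfold tauTilde
    congr 1
    rw [add_div, div_self h1.ne']
    ring
  rw [tau_eq x y hx hy, tau_eq z v hz hv, tau_eq x z hx hz, tau_eq y v hy hv,
    tau_eq x v hx hv, tau_eq y z hy hz]
  rw [← ha_def, ← hb_def, ← hc_def, ← hw_def]
  -- combine logs
  have hlog : ∀ (A B : ℝ), 0 < A → 0 < B → Real.log A + Real.log B = Real.log (A * B) :=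
    fun A B hA hB => (Real.log_mul hA.ne' hB.ne').symm
  rw [hlog _ _ (div_pos hNxy0 sab) (div_pos hNzv0 scw),
    hlog _ _ (div_pos hNxz0 sac) (div_pos hNyv0 sbw),
    hlog _ _ (div_pos hNxv0 saw) (div_pos hNyz0 sbc)]
  -- common denominator
  have hD1 : Real.sqrt (a * b) * Real.sqrt (c * w) = Real.sqrt (a * b * (c * w)) :=
    (Real.sqrt_mul (by positivity) _).symm
  have hD2 : Real.sqrt (a * c) * Real.sqrt (b * w) = Real.sqrt (a * b * (c * w)) := by
    rw [← Real.sqrt_mul (by positivity)]; ring_nf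
  have hD3 : Real.sqrt (a * w) * Real.sqrt (b * c) = Real.sqrt (a * b * (c * w)) := by
    rw [← Real.sqrt_mul (by positivity)]; ring_nf
  set D := Real.sqrt (a * b * (c * w)) with hD
  have hD0 : 0 < D := Real.sqrt_pos.2 (by positivity)
  have e1 : Nxy / Real.sqrt (a * b) * (Nzv / Real.sqrt (c * w)) = Nxy * Nzv / D := by
    rw [div_mul_div_comm, hD1]
  have e2 : Nxz / Real.sqrt (a * c) * (Nyv / Real.sqrt (b * w)) = Nxz * Nyv / D := by
    rw [div_mul_div_comm, hD2]
  have e3 : Nxv / Real.sqrt (a * w) * (Nyz / Real.sqrt (b * c)) = Nxv * Nyz / D := by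
    rw [div_mul_div_comm, hD3]
  rw [e1, e2, e3]
  -- key product inequality : Nxy * Nzv ≤ 9 * max (Nxz * Nyv) (Nxv * Nyz)
  have key : Nxy * Nzv ≤ 9 * max (Nxz * Nyv) (Nxv * Nyz) := by
    -- S values
    set Sxy := dist x y + a + b with hSxy
    set Szv := dist z v + c + w with hSzv
    set Sxz := dist x z + a + c with hSxz
    set Syv := dist y v + b + w with hSyv
    set Sxv := dist x v + a + w with hSxv
    set Syz := dist y z + b + c with hSyz
    -- N ≤ S
    have nsxy : Nxy ≤ Sxy := by
      have := sqrt_le_add ha.le hb.le; simp only [hNxy, hSxy]; linarith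
    have nszv : Nzv ≤ Szv := by
      have := sqrt_le_add hc.le hw.le; simp only [hNzv, hSzv]; linarith
    -- S ≤ 2 N
    have snxz : Sxz ≤ 2 * Nxz := by
      have habs : |a - c| ≤ dist x z := abs_dist_sub_le x z p
      have := S_le_two_N ha.le hc.le habs
      simp only [hNxz, hSxz]; linarith
    have snyv : Syv ≤ 2 * Nyv := by
      have habs : |b - w| ≤ dist y v := abs_dist_sub_le y v p
      have := S_le_two_N hb.le hw.le habs
      simp only [hNyv, hSyv]; linarith
    have snxv : Sxv ≤ 2 * Nxv := by
      have habs : |a - w| ≤ dist x v := abs_dist_sub_le x v p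
      have := S_le_two_N ha.le hw.le habs
      simp only [hNxv, hSxv]; linarith
    have snyz : Syz ≤ 2 * Nyz := by
      have habs : |b - c| ≤ dist y z := abs_dist_sub_le y z p
      have := S_le_two_N hb.le hc.le habs
      simp only [hNyz, hSyz]; linarith
    -- Ptolemy for S
    have ptol : Sxy * Szv ≤ Sxz * Syv + Sxv * Syz := by
      apply ptolemyS a b c w (dist x y) (dist x z) (dist x v) (dist y z) (dist y v)
        (dist z v)
      · exact (dist_triangle x p y).trans (by rw [dist_comm p y])
      · exact (dist_triangle x p z).trans (by rw [dist_comm p z])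
      · exact (dist_triangle x p v).trans (by rw [dist_comm p v])
      · exact (dist_triangle y p z).trans (by rw [dist_comm p z])
      · exact (dist_triangle y p v).trans (by rw [dist_comm p v])
      · exact (dist_triangle z p v).trans (by rw [dist_comm p v])
      · exact dist_triangle x y p
      · exact (dist_triangle y x p).trans (by rw [dist_comm y x])
      · exact dist_triangle x z p
      · exact (dist_triangle z x p).trans (by rw [dist_comm z x])
      · exact dist_triangle x v p
      · exact (dist_triangle v x p).trans (by rw [dist_comm v x])
      · exact dist_triangle y z p
      · exact (dist_triangle z y p).trans (by rw [dist_comm z y])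
      · exact dist_triangle y v p
      · exact (dist_triangle v y p).trans (by rw [dist_comm v y])
      · exact dist_triangle z v p
      · exact (dist_triangle v z p).trans (by rw [dist_comm v z])
      · exact (dist_triangle x z y).trans (by rw [dist_comm z y])
      · exact (dist_triangle x v y).trans (by rw [dist_comm v y])
      · exact (dist_triangle z x v).trans (by rw [dist_comm z x])
      · exact (dist_triangle z y v).trans (by rw [dist_comm z y])
      · exact (dist_triangle x v z).trans (by rw [dist_comm v z])
      · exact dist_triangle x z v
      · exact (dist_triangle y x z).trans (by rw [dist_comm y x])
    have hmax : Sxz * Syv + Sxv * Syz ≤ 2 * max (Sxz * Syv) (Sxv * Syz) := by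
      have h1 : Sxz * Syv ≤ max (Sxz * Syv) (Sxv * Syz) := le_max_left _ _
      have h2 : Sxv * Syz ≤ max (Sxz * Syv) (Sxv * Syz) := le_max_right _ _
      linarith
    have hmax2 : max (Sxz * Syv) (Sxv * Syz) ≤ 4 * max (Nxz * Nyv) (Nxv * Nyz) := by
      apply max_le
      · calc Sxz * Syv ≤ (2 * Nxz) * (2 * Nyv) := by
              apply mul_le_mul snxz snyv (by positivity) (by positivity)
          _ = 4 * (Nxz * Nyv) := by ring
          _ ≤ 4 * max (Nxz * Nyv) (Nxv * Nyz) := by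
              have := le_max_left (Nxz * Nyv) (Nxv * Nyz); linarith
      · calc Sxv * Syz ≤ (2 * Nxv) * (2 * Nyz) := by
              apply mul_le_mul snxv snyz (by positivity) (by positivity)
          _ = 4 * (Nxv * Nyz) := by ring
          _ ≤ 4 * max (Nxz * Nyv) (Nxv * Nyz) := by
              have := le_max_right (Nxz * Nyv) (Nxv * Nyz); linarith
    have hM : 0 < max (Nxz * Nyv) (Nxv * Nyz) :=
      lt_max_of_lt_left (by positivity)
    calc Nxy * Nzv ≤ Sxy * Szv := by
          apply mul_le_mul nsxy nszv hNzv0.le (by positivity)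
      _ ≤ Sxz * Syv + Sxv * Syz := ptol
      _ ≤ 2 * max (Sxz * Syv) (Sxv * Syz) := hmax
      _ ≤ 8 * max (Nxz * Nyv) (Nxv * Nyz) := by linarith
      _ ≤ 9 * max (Nxz * Nyv) (Nxv * Nyz) := by linarith
  -- finish with logs
  have hM : 0 < max (Nxz * Nyv) (Nxv * Nyz) := lt_max_of_lt_left (by positivity)
  have step1 : Real.log (Nxy * Nzv / D) ≤
      Real.log (9 * max (Nxz * Nyv) (Nxv * Nyz) / D) :=
    Real.log_le_log (by positivity) ((div_le_div_iff_of_pos_right hD0).2 key)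
  refine step1.trans (le_of_eq ?_)
  have h9 : Real.log (9 * max (Nxz * Nyv) (Nxv * Nyz) / D)
      = Real.log (max (Nxz * Nyv) (Nxv * Nyz) / D) + 2 * Real.log 3 := by
    rw [show 9 * max (Nxz * Nyv) (Nxv * Nyz) / D
        = (max (Nxz * Nyv) (Nxv * Nyz) / D) * 9 by ring,
      Real.log_mul (by positivity) (by norm_num),
      show (9 : ℝ) = 3 ^ 2 by norm_num, Real.log_pow]
    push_cast
    ring
  rw [h9]
  congr 1
  rcases le_total (Nxz * Nyv) (Nxv * Nyz) with h | h
  · rw [max_eq_right h,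
      max_eq_right (Real.log_le_log (by positivity) ((div_le_div_iff_of_pos_right hD0).2 h))]
  · rw [max_eq_left h,
      max_eq_left (Real.log_le_log (by positivity) ((div_le_div_iff_of_pos_right hD0).2 h))]
end

section
/- Let (X,d) be a metric space and p ∈ X. Then the metric τ_p on X∖{p} satisfies the Gromov four-point condition with constant δ = log 3 + log 2; that is, for all x, y, z, v ∈ X∖{p}, τ_p(x,y) + τ_p(z,v) ≤ max(τ_p(x,z) + τ_p(y,v), τ_p(x,v) + τ_p(y,z)) + 2·(log 3 + log 2). -/
private lemma height_le_u {X : Type*} [MetricSpace X] (p w w' : X) :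
    dist w p ≤ Real.sqrt (dist w p * dist w' p) + 2 * dist w w' := by
  have htri : dist w p ≤ dist w w' + dist w' p := dist_triangle w w' p
  have hs : Real.sqrt (dist w p * dist w' p) ^ 2 = dist w p * dist w' p :=
    Real.sq_sqrt (mul_nonneg dist_nonneg dist_nonneg)
  have hsn : 0 ≤ Real.sqrt (dist w p * dist w' p) := Real.sqrt_nonneg _
  nlinarith [dist_nonneg (x := w) (y := p), dist_nonneg (x := w') (y := p),
    dist_nonneg (x := w) (y := w'),
    mul_nonneg (dist_nonneg (x := w) (y := p)) (sub_nonneg.2 htri)]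

private lemma u_le {X : Type*} [MetricSpace X] (p w w' : X) :
    Real.sqrt (dist w p * dist w' p) + 2 * dist w w' ≤
      5 / 2 * (dist w p + dist w' p) := by
  have htri : dist w w' ≤ dist w p + dist w' p := by
    have := dist_triangle w p w'
    rwa [dist_comm p w'] at this
  have hsq : Real.sqrt (dist w p * dist w' p) ≤ (dist w p + dist w' p) / 2 := by
    rw [show dist w p * dist w' p = ((dist w p + dist w' p)/2)^2 - ((dist w p - dist w' p)/2)^2 by ring]
    calc Real.sqrt (((dist w p + dist w' p)/2)^2 - ((dist w p - dist w' p)/2)^2)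
        ≤ Real.sqrt (((dist w p + dist w' p)/2)^2) := by
          apply Real.sqrt_le_sqrt; nlinarith [sq_nonneg ((dist w p - dist w' p)/2)]
      _ = (dist w p + dist w' p)/2 := by
          rw [Real.sqrt_sq (by positivity)]
  linarith

private lemma tau_eq {X : Type*} [MetricSpace X] (p w w' : X) (h : w ≠ p) (h' : w' ≠ p) :
    tauOne p w w' =
      Real.log (Real.sqrt (dist w p * dist w' p) + 2 * dist w w') -
        (Real.log (dist w p) + Real.log (dist w' p)) / 2 := by
  have ha : (0:ℝ) < dist w p := dist_pos.2 h
  have hb : (0:ℝ) < dist w' p := dist_pos.2 h'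
  have hs : (0:ℝ) < Real.sqrt (dist w p * dist w' p) := Real.sqrt_pos.2 (by positivity)
  unfold tauOne
  rw [show 1 + 2 * dist w w' / Real.sqrt (dist w p * dist w' p)
      = (Real.sqrt (dist w p * dist w' p) + 2 * dist w w') / Real.sqrt (dist w p * dist w' p) by
    field_simp]
  rw [Real.log_div (by positivity) hs.ne', Real.log_sqrt (by positivity),
    Real.log_mul ha.ne' hb.ne']

theorem stmt13 {X : Type*} [MetricSpace X] (p : X)
    (x y z v : X) (hx : x ≠ p) (hy : y ≠ p) (hz : z ≠ p) (hv : v ≠ p) :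
    tauOne p x y + tauOne p z v ≤
      max (tauOne p x z + tauOne p y v) (tauOne p x v + tauOne p y z) +
        2 * (Real.log 3 + Real.log 2) := by
  set a := dist x p with ha'
  set b := dist y p with hb'
  set c := dist z p with hc'
  set e := dist v p with he'
  have ha : (0:ℝ) < a := dist_pos.2 hx
  have hb : (0:ℝ) < b := dist_pos.2 hy
  have hc : (0:ℝ) < c := dist_pos.2 hz
  have he : (0:ℝ) < e := dist_pos.2 hv
  set uxy := Real.sqrt (a * b) + 2 * dist x y with huxy
  set uzv := Real.sqrt (c * e) + 2 * dist z v with huzv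
  set uxz := Real.sqrt (a * c) + 2 * dist x z with huxz
  set uyv := Real.sqrt (b * e) + 2 * dist y v with huyv
  set uxv := Real.sqrt (a * e) + 2 * dist x v with huxv
  set uyz := Real.sqrt (b * c) + 2 * dist y z with huyz
  -- positivity of u's
  have puxy : 0 < uxy := by have := Real.sqrt_pos.2 (mul_pos ha hb); have := dist_nonneg (x := x) (y := y); rw [huxy]; linarith
  have puzv : 0 < uzv := by have := Real.sqrt_pos.2 (mul_pos hc he); have := dist_nonneg (x := z) (y := v); rw [huzv]; linarith
  have puxz : 0 < uxz := by have := Real.sqrt_pos.2 (mul_pos ha hc); have := dist_nonneg (x := x) (y := z); rw [huxz]; linarith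
  have puyv : 0 < uyv := by have := Real.sqrt_pos.2 (mul_pos hb he); have := dist_nonneg (x := y) (y := v); rw [huyv]; linarith
  have puxv : 0 < uxv := by have := Real.sqrt_pos.2 (mul_pos ha he); have := dist_nonneg (x := x) (y := v); rw [huxv]; linarith
  have puyz : 0 < uyz := by have := Real.sqrt_pos.2 (mul_pos hb hc); have := dist_nonneg (x := y) (y := z); rw [huyz]; linarith
  -- height lower bounds
  have h_a_xz : a ≤ uxz := height_le_u p x z
  have h_c_xz : c ≤ uxz := by have := height_le_u p z x; rwa [mul_comm, dist_comm z x] at this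
  have h_b_yv : b ≤ uyv := height_le_u p y v
  have h_e_yv : e ≤ uyv := by have := height_le_u p v y; rwa [mul_comm, dist_comm v y] at this
  have h_a_xv : a ≤ uxv := height_le_u p x v
  have h_e_xv : e ≤ uxv := by have := height_le_u p v x; rwa [mul_comm, dist_comm v x] at this
  have h_b_yz : b ≤ uyz := height_le_u p y z
  have h_c_yz : c ≤ uyz := by have := height_le_u p z y; rwa [mul_comm, dist_comm z y] at this
  -- upper bounds
  have hUxy : uxy ≤ 5/2 * (a + b) := u_le p x y
  have hUzv : uzv ≤ 5/2 * (c + e) := u_le p z v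
  -- key multiplicative inequality
  set P := max (uxz * uyv) (uxv * uyz) with hP
  have hP1 : uxz * uyv ≤ P := le_max_left _ _
  have hP2 : uxv * uyz ≤ P := le_max_right _ _
  have hPpos : 0 < P := lt_of_lt_of_le (mul_pos puxz puyv) hP1
  have key : uxy * uzv ≤ 36 * P := by
    have h1 : a * e ≤ uxz * uyv := mul_le_mul h_a_xz h_e_yv he.le puxz.le
    have h2 : b * c ≤ uxz * uyv := by
      calc b * c = c * b := mul_comm _ _
        _ ≤ uxz * uyv := mul_le_mul h_c_xz h_b_yv hb.le puxz.le
    have h3 : a * c ≤ uxv * uyz := mul_le_mul h_a_xv h_c_yz hc.le puxv.le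
    have h4 : b * e ≤ uxv * uyz := by
      calc b * e = e * b := mul_comm _ _
        _ ≤ uxv * uyz := mul_le_mul h_e_xv h_b_yz hb.le puxv.le
    have hL : uxy * uzv ≤ (5/2 * (a + b)) * (5/2 * (c + e)) :=
      mul_le_mul hUxy hUzv puzv.le (by positivity)
    nlinarith [hP1, hP2]
  -- now the log part
  have hlog : Real.log uxy + Real.log uzv ≤ Real.log 36 + Real.log P := by
    have := Real.log_le_log (mul_pos puxy puzv) key
    rwa [Real.log_mul (by norm_num) hPpos.ne', Real.log_mul puxy.ne' puzv.ne'] at this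
  have h36 : Real.log 36 = 2 * (Real.log 3 + Real.log 2) := by
    rw [show (36:ℝ) = 3^2 * 2^2 by norm_num, Real.log_mul (by norm_num) (by norm_num),
      Real.log_pow, Real.log_pow]
    push_cast; ring
  rw [tau_eq p x y hx hy, tau_eq p z v hz hv, tau_eq p x z hx hz, tau_eq p y v hy hv,
    tau_eq p x v hx hv, tau_eq p y z hy hz]
  rcases le_total (uxz * uyv) (uxv * uyz) with hcase | hcase
  · have hPe : P = uxv * uyz := max_eq_right hcase
    have : Real.log P = Real.log uxv + Real.log uyz := by
      rw [hPe, Real.log_mul puxv.ne' puyz.ne']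
    have hge := le_max_right
      (Real.log uxz - (Real.log a + Real.log c) / 2 + (Real.log uyv - (Real.log b + Real.log e) / 2))
      (Real.log uxv - (Real.log a + Real.log e) / 2 + (Real.log uyz - (Real.log b + Real.log c) / 2))
    linarith [hlog, h36, this, hge]
  · have hPe : P = uxz * uyv := max_eq_left hcase
    have : Real.log P = Real.log uxz + Real.log uyv := by
      rw [hPe, Real.log_mul puxz.ne' puyv.ne']
    have hge := le_max_left
      (Real.log uxz - (Real.log a + Real.log c) / 2 + (Real.log uyv - (Real.log b + Real.log e) / 2))
      (Real.log uxv - (Real.log a + Real.log e) / 2 + (Real.log uyz - (Real.log b + Real.log c) / 2))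
    linarith [hlog, h36, this, hge]
end

section
/- Let (X,d) be a metric space, let p_1, …, p_k ∈ X (k ≥ 1), and let D = X∖{p_1, …, p_k}. Then the average τ̃_D satisfies the Gromov four-point condition with constant δ = 3·log 3; that is, for all x, y, z, w ∈ D, τ̃_D(x,y) + τ̃_D(z,w) ≤ max(τ̃_D(x,z) + τ̃_D(y,w), τ̃_D(x,w) + τ̃_D(y,z)) + 6·log 3. -/
noncomputable def tauTildeAvg {X : Type*} [MetricSpace X] {k : ℕ}
    (p : Fin k → X) (x y : X) : ℝ :=
  (1 / k : ℝ) * ∑ i : Fin k, tauTilde (p i) x y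


private lemma core_min (a b c e dxz dyw dxw dyz : ℝ)
    (hb : 0 ≤ b) (hc : 0 ≤ c)
    (h1 : a - c ≤ dxz) (h2 : e - b ≤ dyw)
    (h3 : dxw ≤ a + e) (h4 : dyz ≤ b + c)
    (hyz : 0 ≤ dyz)
    (H : dxz * dyw ≤ dxw * dyz) :
    min a e ≤ 8 * (b + c) := by
  by_contra hcon
  push_neg at hcon
  have haa : 8 * (b + c) < a := lt_of_lt_of_le hcon (min_le_left _ _)
  have hee : 8 * (b + c) < e := lt_of_lt_of_le hcon (min_le_right _ _)
  have hac : (0:ℝ) ≤ a - c := by nlinarith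
  have heb : (0:ℝ) ≤ e - b := by nlinarith
  have k1 : (a - c) * (e - b) ≤ dxz * dyw :=
    mul_le_mul h1 h2 heb (le_trans hac h1)
  have k2 : dxw * dyz ≤ (a + e) * (b + c) :=
    mul_le_mul h3 h4 hyz (by nlinarith)
  nlinarith [mul_pos (lt_of_le_of_lt (by positivity : (0:ℝ) ≤ 8*(b+c)) haa)
      (lt_of_le_of_lt (by positivity : (0:ℝ) ≤ 8*(b+c)) hee)]

private lemma core_max (a b c e : ℝ)
    (ha : 0 ≤ a) (hb : 0 ≤ b) (hc : 0 ≤ c) (he : 0 ≤ e)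
    (hmin1 : min a e ≤ 8 * (b + c)) (hmin2 : min b c ≤ 8 * (a + e)) :
    max a b * max c e ≤ 16 * (max a e * max b c) := by
  have nae : (0:ℝ) ≤ max a e := le_trans ha (le_max_left a e)
  have nbc : (0:ℝ) ≤ max b c := le_trans hb (le_max_left b c)
  have pae : max a e * min a e = a * e := max_mul_min a e
  have pbc : max b c * min b c = b * c := max_mul_min b c
  have m1 : min a e ≤ 16 * max b c := by
    have := le_max_left b c; have := le_max_right b c; linarith
  have m2 : min b c ≤ 16 * max a e := by
    have := le_max_left a e; have := le_max_right a e; linarith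
  rcases le_total b a with h1|h1 <;> rcases le_total e c with h2|h2
  · rw [max_eq_left h1, max_eq_left h2]
    nlinarith [le_max_left a e, le_max_right b c, mul_le_mul (le_max_left a e)
      (le_max_right b c) hc nae]
  · rw [max_eq_left h1, max_eq_right h2]
    nlinarith [min_le_left a e, min_le_right a e, mul_le_mul_of_nonneg_left m1 nae,
      max_mul_min a e]
  · rw [max_eq_right h1, max_eq_left h2]
    nlinarith [mul_le_mul_of_nonneg_left m2 nbc, max_mul_min b c]
  · rw [max_eq_right h1, max_eq_right h2]
    nlinarith [mul_le_mul (le_max_right a e) (le_max_left b c) hb nae]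

private lemma sqrt_le_max (a b : ℝ) (ha : 0 ≤ a) (hb : 0 ≤ b) :
    Real.sqrt (a * b) ≤ max a b := by
  have h : a * b ≤ max a b * max a b := by
    rcases le_total a b with h|h
    · rw [max_eq_right h]; nlinarith
    · rw [max_eq_left h]; nlinarith
  calc Real.sqrt (a * b) ≤ Real.sqrt (max a b * max a b) := Real.sqrt_le_sqrt h
    _ = max a b := Real.sqrt_mul_self (le_trans ha (le_max_left a b))

private lemma min_le_sqrt (a b : ℝ) (ha : 0 ≤ a) (hb : 0 ≤ b) :
    min a b ≤ Real.sqrt (a * b) := by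
  have h : min a b * min a b ≤ a * b := by
    rcases le_total a b with h|h
    · rw [min_eq_left h]; nlinarith
    · rw [min_eq_right h]; nlinarith
  calc min a b = Real.sqrt (min a b * min a b) :=
        (Real.sqrt_mul_self (le_min ha hb)).symm
    _ ≤ Real.sqrt (a * b) := Real.sqrt_le_sqrt h

private lemma key_s14 (a b c e dxy dzw dxz dyw dxw dyz : ℝ)
    (ha : 0 ≤ a) (hb : 0 ≤ b) (hc : 0 ≤ c) (he : 0 ≤ e)
    (hdxy0 : 0 ≤ dxy) (hdzw0 : 0 ≤ dzw)
    (hdxy : dxy ≤ a + b) (hdzw : dzw ≤ c + e)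
    (h1 : a - c ≤ dxz) (h1' : c - a ≤ dxz)
    (h2 : e - b ≤ dyw) (h2' : b - e ≤ dyw)
    (h3 : dxw ≤ a + e) (h4 : dyz ≤ b + c)
    (h3' : a - e ≤ dxw) (h3'' : e - a ≤ dxw)
    (h4' : b - c ≤ dyz) (h4'' : c - b ≤ dyz)
    (hxw : 0 ≤ dxw) (hyz : 0 ≤ dyz)
    (H : dxz * dyw ≤ dxw * dyz) :
    (dxy + Real.sqrt (a * b)) * (dzw + Real.sqrt (c * e)) ≤
      729 * ((dxw + Real.sqrt (a * e)) * (dyz + Real.sqrt (b * c))) := by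
  have hmin1 : min a e ≤ 8 * (b + c) :=
    core_min a b c e dxz dyw dxw dyz hb hc h1 h2 h3 h4 hyz H
  have hmin2 : min b c ≤ 8 * (a + e) := by
    have := core_min c e a b dxz dyw dyz dxw he ha h1' h2' (by linarith : dyz ≤ c + b) (by linarith : dxw ≤ e + a) hxw
      (by linarith [mul_comm dxw dyz])
    rw [min_comm] at this; linarith
  have M := core_max a b c e ha hb hc he hmin1 hmin2
  -- upper bounds on left factors
  have u1 : dxy + Real.sqrt (a * b) ≤ 3 * max a b := by
    have := sqrt_le_max a b ha hb
    have := le_max_left a b; have := le_max_right a b; linarith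
  have u2 : dzw + Real.sqrt (c * e) ≤ 3 * max c e := by
    have := sqrt_le_max c e hc he
    have := le_max_left c e; have := le_max_right c e; linarith
  -- lower bounds on right factors
  have l1 : max a e ≤ dxw + Real.sqrt (a * e) := by
    have hm : max a e ≤ min a e + dxw := by
      rcases le_total a e with h|h
      · rw [max_eq_right h, min_eq_left h]; linarith
      · rw [max_eq_left h, min_eq_right h]; linarith
    have := min_le_sqrt a e ha he; linarith
  have l2 : max b c ≤ dyz + Real.sqrt (b * c) := by
    have hm : max b c ≤ min b c + dyz := by
      rcases le_total b c with h|h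
      · rw [max_eq_right h, min_eq_left h]; linarith
      · rw [max_eq_left h, min_eq_right h]; linarith
    have := min_le_sqrt b c hb hc; linarith
  have nab : (0:ℝ) ≤ max a b := le_trans ha (le_max_left a b)
  have nce : (0:ℝ) ≤ max c e := le_trans hc (le_max_left c e)
  have nae : (0:ℝ) ≤ max a e := le_trans ha (le_max_left a e)
  have nbc : (0:ℝ) ≤ max b c := le_trans hb (le_max_left b c)
  have s1n : 0 ≤ dxy + Real.sqrt (a * b) := by positivity
  have step1 : (dxy + Real.sqrt (a * b)) * (dzw + Real.sqrt (c * e)) ≤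
      (3 * max a b) * (3 * max c e) :=
    mul_le_mul u1 u2 (by positivity) (by linarith)
  have step2 : max a e * max b c ≤
      (dxw + Real.sqrt (a * e)) * (dyz + Real.sqrt (b * c)) :=
    mul_le_mul l1 l2 nbc (by positivity)
  nlinarith [step1, step2, M, mul_nonneg nae nbc]


private lemma tauTilde_comm {X : Type*} [MetricSpace X] (p x y : X) :
    tauTilde p x y = tauTilde p y x := by
  unfold tauTilde; rw [dist_comm x y, mul_comm]

private lemma tauTilde_pair {X : Type*} [MetricSpace X] (p x y z w : X)
    (hx : x ≠ p) (hy : y ≠ p) (hz : z ≠ p) (hw : w ≠ p)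
    (H : dist x z * dist y w ≤ dist x w * dist y z) :
    tauTilde p x y + tauTilde p z w ≤
      tauTilde p x w + tauTilde p y z + 6 * Real.log 3 := by
  have ha : 0 < dist x p := dist_pos.mpr hx
  have hb : 0 < dist y p := dist_pos.mpr hy
  have hc : 0 < dist z p := dist_pos.mpr hz
  have he : 0 < dist w p := dist_pos.mpr hw
  set a := dist x p with hadef
  set b := dist y p with hbdef
  set c := dist z p with hcdef
  set e := dist w p with hedef
  have hP1 : 0 < Real.sqrt (a * b) := Real.sqrt_pos.mpr (by positivity)
  have hP2 : 0 < Real.sqrt (c * e) := Real.sqrt_pos.mpr (by positivity)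
  have hP3 : 0 < Real.sqrt (a * e) := Real.sqrt_pos.mpr (by positivity)
  have hP4 : 0 < Real.sqrt (b * c) := Real.sqrt_pos.mpr (by positivity)
  have ePP : Real.sqrt (a * b) * Real.sqrt (c * e)
      = Real.sqrt (a * e) * Real.sqrt (b * c) := by
    rw [← Real.sqrt_mul (by positivity) (c * e), ← Real.sqrt_mul (by positivity) (b * c)]
    ring_nf
  have hkey : (dist x y + Real.sqrt (a * b)) * (dist z w + Real.sqrt (c * e)) ≤
      729 * ((dist x w + Real.sqrt (a * e)) * (dist y z + Real.sqrt (b * c))) := by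
    apply key_s14 a b c e (dist x y) (dist z w) (dist x z) (dist y w) (dist x w) (dist y z)
      ha.le hb.le hc.le he.le dist_nonneg dist_nonneg
    · have := dist_triangle x p y; rw [dist_comm p y] at this; linarith
    · have := dist_triangle z p w; rw [dist_comm p w] at this; linarith
    · have := dist_triangle x z p; linarith
    · have := dist_triangle z x p; rw [dist_comm z x] at this; linarith
    · have := dist_triangle w y p; rw [dist_comm w y] at this; linarith
    · have := dist_triangle y w p; linarith
    · have := dist_triangle x p w; rw [dist_comm p w] at this; linarith
    · have := dist_triangle y p z; rw [dist_comm p z] at this; linarith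
    · have := dist_triangle x w p; linarith
    · have := dist_triangle w x p; rw [dist_comm w x] at this; linarith
    · have := dist_triangle y z p; linarith
    · have := dist_triangle z y p; rw [dist_comm z y] at this; linarith
    · exact dist_nonneg
    · exact dist_nonneg
    · exact H
  have eA : 1 + dist x y / Real.sqrt (a * b)
      = (dist x y + Real.sqrt (a * b)) / Real.sqrt (a * b) := by field_simp; ring
  have eB : 1 + dist z w / Real.sqrt (c * e)
      = (dist z w + Real.sqrt (c * e)) / Real.sqrt (c * e) := by field_simp; ring
  have eC : 1 + dist x w / Real.sqrt (a * e)
      = (dist x w + Real.sqrt (a * e)) / Real.sqrt (a * e) := by field_simp; ring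
  have eD : 1 + dist y z / Real.sqrt (b * c)
      = (dist y z + Real.sqrt (b * c)) / Real.sqrt (b * c) := by field_simp; ring
  have hApos : 0 < 1 + dist x y / Real.sqrt (a * b) := by positivity
  have hBpos : 0 < 1 + dist z w / Real.sqrt (c * e) := by positivity
  have hCpos : 0 < 1 + dist x w / Real.sqrt (a * e) := by positivity
  have hDpos : 0 < 1 + dist y z / Real.sqrt (b * c) := by positivity
  have hmain : (1 + dist x y / Real.sqrt (a * b)) * (1 + dist z w / Real.sqrt (c * e)) ≤
      729 * ((1 + dist x w / Real.sqrt (a * e)) * (1 + dist y z / Real.sqrt (b * c))) := by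
    rw [eA, eB, eC, eD, div_mul_div_comm, div_mul_div_comm, ePP, ← mul_div_assoc]
    exact div_le_div_of_nonneg_right hkey (by positivity)
  have h729 : Real.log 729 = 6 * Real.log 3 := by
    rw [show (729:ℝ) = 3 ^ 6 by norm_num, Real.log_pow]; norm_num
  have e1 : tauTilde p x y = Real.log (1 + dist x y / Real.sqrt (a * b)) := by
    rw [hadef, hbdef]; rfl
  have e2 : tauTilde p z w = Real.log (1 + dist z w / Real.sqrt (c * e)) := by
    rw [hcdef, hedef]; rfl
  have e3 : tauTilde p x w = Real.log (1 + dist x w / Real.sqrt (a * e)) := by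
    rw [hadef, hedef]; rfl
  have e4 : tauTilde p y z = Real.log (1 + dist y z / Real.sqrt (b * c)) := by
    rw [hbdef, hcdef]; rfl
  rw [e1, e2, e3, e4, ← Real.log_mul hApos.ne' hBpos.ne', ← h729,
    ← Real.log_mul hCpos.ne' hDpos.ne',
    ← Real.log_mul (by positivity) (by norm_num : (729:ℝ) ≠ 0)]
  apply Real.log_le_log (by positivity)
  linarith [hmain]

private lemma avg_le_avg_add {k : ℕ} (hk : 1 ≤ k) (f g : Fin k → ℝ) (C : ℝ)
    (h : ∀ i, f i ≤ g i + C) :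
    (1 / k : ℝ) * ∑ i, f i ≤ (1 / k : ℝ) * ∑ i, g i + C := by
  have hk0 : (0:ℝ) < k := by exact_mod_cast hk
  have hsum : ∑ i, f i ≤ ∑ i, (g i + C) := Finset.sum_le_sum (fun i _ => h i)
  rw [Finset.sum_add_distrib, Finset.sum_const, Finset.card_univ, Fintype.card_fin,
    nsmul_eq_mul] at hsum
  have h2 := mul_le_mul_of_nonneg_left hsum (le_of_lt (one_div_pos.mpr hk0))
  rw [mul_add] at h2
  have h3 : (1 / (k:ℝ)) * ((k:ℝ) * C) = C := by field_simp
  linarith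


theorem stmt14 {X : Type*} [MetricSpace X] (k : ℕ) (hk : 1 ≤ k)
    (p : Fin k → X) (x y z w : X)
    (hx : ∀ i, x ≠ p i) (hy : ∀ i, y ≠ p i)
    (hz : ∀ i, z ≠ p i) (hw : ∀ i, w ≠ p i) :
    tauTildeAvg p x y + tauTildeAvg p z w ≤
      max (tauTildeAvg p x z + tauTildeAvg p y w)
        (tauTildeAvg p x w + tauTildeAvg p y z) + 6 * Real.log 3 := by
  rcases le_total (dist x z * dist y w) (dist x w * dist y z) with H|H
  · -- use branch (x,w),(y,z)
    have hpt : ∀ i, (tauTilde (p i) x y + tauTilde (p i) z w) ≤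
        (tauTilde (p i) x w + tauTilde (p i) y z) + 6 * Real.log 3 :=
      fun i => tauTilde_pair (p i) x y z w (hx i) (hy i) (hz i) (hw i) H
    have havg := avg_le_avg_add hk
      (fun i => tauTilde (p i) x y + tauTilde (p i) z w)
      (fun i => tauTilde (p i) x w + tauTilde (p i) y z) (6 * Real.log 3) hpt
    rw [Finset.sum_add_distrib, Finset.sum_add_distrib, mul_add, mul_add] at havg
    refine le_trans havg ?_
    have := le_max_right (tauTildeAvg p x z + tauTildeAvg p y w)
      (tauTildeAvg p x w + tauTildeAvg p y z)
    unfold tauTildeAvg at *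
    linarith
  · -- use branch (x,z),(y,w)
    have hpt : ∀ i, (tauTilde (p i) x y + tauTilde (p i) z w) ≤
        (tauTilde (p i) x z + tauTilde (p i) y w) + 6 * Real.log 3 := by
      intro i
      have := tauTilde_pair (p i) x y w z (hx i) (hy i) (hw i) (hz i)
        (by rw [dist_comm x w, dist_comm y z] at H ⊢; linarith)
      rw [tauTilde_comm (p i) w z] at this
      linarith
    have havg := avg_le_avg_add hk
      (fun i => tauTilde (p i) x y + tauTilde (p i) z w)
      (fun i => tauTilde (p i) x z + tauTilde (p i) y w) (6 * Real.log 3) hpt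
    rw [Finset.sum_add_distrib, Finset.sum_add_distrib, mul_add, mul_add] at havg
    refine le_trans havg ?_
    have := le_max_left (tauTildeAvg p x z + tauTildeAvg p y w)
      (tauTildeAvg p x w + tauTildeAvg p y z)
    unfold tauTildeAvg at *
    linarith
end

section
/- Let d₁(x,y) = |x₁ − y₁| + arctan(|x₂ − y₂|) and d₂(x,y) = |x₂ − y₂| + arctan(|x₁ − y₁|) on ℝ², and set d = d₁ + d₂. Then (ℝ², d) does not satisfy the Gromov four-point condition for any constant: for every δ ≥ 0 there exist points x, y, z, v ∈ ℝ² with d(x,y) + d(z,v) > max(d(x,z) + d(y,v), d(x,v) + d(y,z)) + 2δ. Thus the sum of two Gromov hyperbolic metrics need not be Gromov hyperbolic. -/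
noncomputable def dOne (x y : ℝ × ℝ) : ℝ :=
  |x.1 - y.1| + Real.arctan |x.2 - y.2|

noncomputable def dTwo (x y : ℝ × ℝ) : ℝ :=
  |x.2 - y.2| + Real.arctan |x.1 - y.1|

noncomputable def dSum (x y : ℝ × ℝ) : ℝ :=
  dOne x y + dTwo x y

/-! `dSum x y = φ |x₁ - y₁| + φ |x₂ - y₂|` with `φ t = t + arctan t`. On the axis-parallel square
with vertices `(0,0), (R,0), (R,R), (0,R)` both diagonals have length `2 φ R` while every side has
length `φ R`, so the four-point defect is `2 φ R > 2 R`, which exceeds `2 δ` once `R > δ`. -/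

open Real

theorem dSum_eq (x y : ℝ × ℝ) :
    dSum x y = (|x.1 - y.1| + arctan |x.1 - y.1|) + (|x.2 - y.2| + arctan |x.2 - y.2|) := by
  unfold dSum dOne dTwo
  ring

theorem stmt19 :
    ∀ δ : ℝ, 0 ≤ δ → ∃ x y z v : ℝ × ℝ,
      dSum x y + dSum z v >
        max (dSum x z + dSum y v) (dSum x v + dSum y z) + 2 * δ := by
  intro δ hδ
  set R : ℝ := δ + 1
  have hR : 0 < R := by positivity
  refine ⟨(0, 0), (R, R), (R, 0), (0, R), ?_⟩
  have hside : |(0 : ℝ) - R| = R ∧ |R - 0| = R := by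
    simp [abs_of_pos hR]
  simp only [dSum_eq, hside, sub_self, abs_zero, arctan_zero, add_zero, zero_add, max_self]
  linarith [arctan_pos.mpr hR]
end
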